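/- arXiv:math/0602462 — 4 statements merged into one kernel-verified Lean document; each statement's English description precedes it below -/
import Mathlib

section
/- Let Z be a right-continuous process bounded in absolute value by a uniformly integrable martingale (in particular, sup_{t≥0}|Z(t)| is integrable). Then limsup_{ε↓0} sup_{τ stopping time} E[|Z(τ∧T) − Z(τ∧(T+ε))| 1_{T<τ}] = 0. -/
/-! Uniformly in `τ`, the integrand is at most the oscillation
`sup_{T < s < T + 2ε} |Z T - Z s|` of the path, which by right-continuity may be taken over
rational `s` (so it is measurable) and tends to `0` as `ε ↓ 0`. It is dominated by
`2 sup_t |Z t|`, so dominated convergence concludes — provided this supremum is finite (in `ℝ`,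
`⨆` of an unbounded family is `0`). Finiteness holds a.s.: Doob's maximal inequality for the
`L¹`-bounded submartingale `|M|` bounds `M` on the rationals, hence `Z` there, and
right-continuity transfers the bound to all times. -/

open MeasureTheory Filter Set Topology
open scoped NNReal ENNReal

theorem Finset.exists_monotone_image_range_eq {ι : Type*} [LinearOrder ι] {s : Finset ι}
    (hs : s.Nonempty) : ∃ t : ℕ → ι, Monotone t ∧ (Finset.range s.card).image t = s := by
  have hpos : 0 < s.card := hs.card_pos
  let e := s.orderEmbOfFin rfl
  refine ⟨fun i => e ⟨min i (s.card - 1), by omega⟩, fun i j hij => e.monotone ?_, ?_⟩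
  · exact Fin.mk_le_mk.2 (min_le_min_right _ hij)
  · rw [← Finset.coe_inj, Finset.coe_image, ← s.range_orderEmbOfFin rfl]
    ext x
    simp only [Finset.coe_range, Set.mem_image, Set.mem_Iio, Set.mem_range]
    constructor
    · rintro ⟨i, -, rfl⟩
      exact ⟨_, rfl⟩
    · rintro ⟨⟨i, hi⟩, rfl⟩
      exact ⟨i, hi, by congr; omega⟩

namespace MeasureTheory

variable {Ω ι κ : Type*} {m0 : MeasurableSpace Ω} {μ : Measure Ω}

def Filtration.comp [Preorder ι] [Preorder κ] (ℱ : Filtration ι m0) {t : κ → ι}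
    (ht : Monotone t) : Filtration κ m0 where
  seq k := ℱ (t k)
  mono' _ _ hij := ℱ.mono (ht hij)
  le' k := ℱ.le (t k)

theorem Submartingale.comp [Preorder ι] [Preorder κ] {ℱ : Filtration ι m0} {f : ι → Ω → ℝ}
    (hf : Submartingale f ℱ μ) {t : κ → ι} (ht : Monotone t) :
    Submartingale (fun k => f (t k)) (ℱ.comp ht) μ :=
  ⟨fun k => hf.stronglyAdapted (t k), fun _ _ hij => hf.ae_le_condExp (ht hij),
    fun k => hf.integrable (t k)⟩

theorem Martingale.abs [Preorder ι] {ℱ : Filtration ι m0} {f : ι → Ω → ℝ}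
    (hf : Martingale f ℱ μ) : Submartingale (fun i ω => |f i ω|) ℱ μ := by
  refine ⟨fun i => (hf.stronglyAdapted i).norm, fun i j hij => ?_, fun i => (hf.integrable i).abs⟩
  filter_upwards [hf.condExp_ae_eq hij, abs_condExp_ae_le_condExp_abs (μ := μ) (m := ℱ i) (f j)]
    with ω hcond habs
  exact hcond ▸ habs

theorem Integrable.ofReal_setIntegral_abs_le_eLpNorm {f : Ω → ℝ} (hf : Integrable f μ)
    (s : Set Ω) :
    ENNReal.ofReal (∫ ω in s, |f ω| ∂μ) ≤ eLpNorm f 1 μ := by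
  rw [eLpNorm_one_eq_lintegral_enorm, ← ofReal_integral_norm_eq_lintegral_enorm hf]
  exact ENNReal.ofReal_le_ofReal
    (setIntegral_le_integral hf.norm (.of_forall fun ω => norm_nonneg (f ω)))

theorem Martingale.maximal_ineq_abs_finset [LinearOrder ι] [IsFiniteMeasure μ]
    {ℱ : Filtration ι m0} {M : ι → Ω → ℝ} (hM : Martingale M ℱ μ) {C : ℝ≥0}
    (hC : ∀ i, eLpNorm (M i) 1 μ ≤ C) (c : ℝ≥0) (s : Finset ι) :
    c * μ {ω | ∃ i ∈ s, c ≤ |M i ω|} ≤ C := by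
  rcases s.eq_empty_or_nonempty with rfl | hs
  · simp
  obtain ⟨t, ht, hts⟩ := Finset.exists_monotone_image_range_eq hs
  obtain ⟨n, hn⟩ : ∃ n, s.card = n + 1 := ⟨_, (Nat.succ_pred_eq_of_pos hs.card_pos).symm⟩
  rw [hn] at hts
  have hset : {ω | (c : ℝ) ≤ (Finset.range (n + 1)).sup' Finset.nonempty_range_add_one
      fun k => |M (t k) ω|} = {ω | ∃ i ∈ s, c ≤ |M i ω|} := by
    ext ω
    simp only [mem_ofPred_eq, Finset.le_sup'_iff, ← hts, Finset.exists_mem_image]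
  have hmax := maximal_ineq (hM.abs.comp ht) (fun k ω => abs_nonneg _) (ε := c) n
  rw [hset] at hmax
  exact hmax.trans (((hM.integrable _).ofReal_setIntegral_abs_le_eLpNorm _).trans (hC _))

theorem Martingale.maximal_ineq_abs_seq [LinearOrder ι] [IsFiniteMeasure μ]
    {ℱ : Filtration ι m0} {M : ι → Ω → ℝ} (hM : Martingale M ℱ μ) {C : ℝ≥0}
    (hC : ∀ i, eLpNorm (M i) 1 μ ≤ C) (c : ℝ≥0) (t : ℕ → ι) :
    c * μ {ω | ∃ k, c ≤ |M (t k) ω|} ≤ C := by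
  have hunion : {ω | ∃ k, (c : ℝ) ≤ |M (t k) ω|}
      = ⋃ n, {ω | ∃ i ∈ (Finset.range n).image t, c ≤ |M i ω|} := by
    ext ω
    simp only [mem_ofPred_eq, mem_iUnion, Finset.exists_mem_image, Finset.mem_range]
    exact ⟨fun ⟨k, hk⟩ => ⟨k + 1, k, k.lt_succ_self, hk⟩, fun ⟨_, k, _, hk⟩ => ⟨k, hk⟩⟩
  have hmono : Monotone fun n => {ω | ∃ i ∈ (Finset.range n).image t, (c : ℝ) ≤ |M i ω|} :=
    fun m n hmn ω ⟨i, hi, hci⟩ =>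
      ⟨i, Finset.image_subset_image (Finset.range_subset_range.2 hmn) hi, hci⟩
  rw [hunion, hmono.measure_iUnion, ENNReal.mul_iSup]
  exact iSup_le fun n => hM.maximal_ineq_abs_finset hC c _

theorem Martingale.ae_bddAbove_abs_seq [LinearOrder ι] [IsFiniteMeasure μ]
    {ℱ : Filtration ι m0} {M : ι → Ω → ℝ} (hM : Martingale M ℱ μ) {C : ℝ≥0}
    (hC : ∀ i, eLpNorm (M i) 1 μ ≤ C) (t : ℕ → ι) :
    ∀ᵐ ω ∂μ, BddAbove (range fun k => |M (t k) ω|) := by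
  have hbound : ∀ᶠ n : ℕ in atTop,
      μ {ω | ¬BddAbove (range fun k => |M (t k) ω|)} ≤ (n : ℝ≥0∞)⁻¹ * C := by
    filter_upwards [eventually_ge_atTop 1] with n hn
    have hsub : {ω | ¬BddAbove (range fun k => |M (t k) ω|)}
        ⊆ {ω | ∃ k, (n : ℝ≥0) ≤ |M (t k) ω|} :=
      fun ω hω => by
        simp only [not_bddAbove_iff, mem_range, exists_exists_eq_and] at hω
        obtain ⟨k, hk⟩ := hω n
        exact ⟨k, by exact_mod_cast hk.le⟩
    rw [← ENNReal.mul_le_iff_le_inv (by simp; omega) (by simp)]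
    exact (mul_le_mul_right (measure_mono hsub) _).trans
      (by exact_mod_cast hM.maximal_ineq_abs_seq hC n t)
  have hlim : Tendsto (fun n : ℕ => (n : ℝ≥0∞)⁻¹ * C) atTop (𝓝 0) := by
    simpa using ENNReal.Tendsto.mul_const ENNReal.tendsto_inv_nat_nhds_zero
      (Or.inr ENNReal.coe_ne_top)
  exact le_antisymm (ge_of_tendsto hlim hbound) bot_le

end MeasureTheory

theorem ContinuousWithinAt.mem_of_mapsTo_dense_Ioo {X α : Type*} [LinearOrder X]
    [TopologicalSpace X] [OrderTopology X] [DenselyOrdered X] [TopologicalSpace α]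
    {f : X → α} {D : Set X} (hD : Dense D) {K : Set α} (hK : IsClosed K) {t u : X} (htu : t < u)
    (hf : ContinuousWithinAt f (Ici t) t) (hfK : MapsTo f (Ioo t u ∩ D) K) : f t ∈ K := by
  have ht : t ∈ closure (Ioo t u ∩ D) :=
    closure_minimal (hD.open_subset_closure_inter isOpen_Ioo) isClosed_closure
      (by rw [closure_Ioo htu.ne]; exact left_mem_Icc.2 htu.le)
  exact closure_minimal hfK.image_subset hK
    ((hf.mono fun s hs => hs.1.1.le).mem_closure_image ht)

noncomputable def ratRightOscillation (f : ℝ → ℝ) (T δ : ℝ) : ℝ≥0∞ :=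
  ⨆ q : ℚ, ⨆ _ : (q : ℝ) ∈ Ioo T (T + δ), ENNReal.ofReal |f T - f q|

section ratRightOscillation

variable {f : ℝ → ℝ} {T δ : ℝ}

theorem ofReal_abs_sub_le_ratRightOscillation {s : ℝ} (hf : ContinuousWithinAt f (Ici s) s)
    (hs : s ∈ Ioo T (T + δ)) : ENNReal.ofReal |f T - f s| ≤ ratRightOscillation f T δ := by
  have hK : IsClosed {x | ENNReal.ofReal |f T - x| ≤ ratRightOscillation f T δ} :=
    isClosed_le (ENNReal.continuous_ofReal.comp (continuous_const.sub continuous_id).abs)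
      continuous_const
  refine hf.mem_of_mapsTo_dense_Ioo Rat.denseRange_cast hK hs.2 ?_
  rintro _ ⟨hq, q, rfl⟩
  exact le_iSup₂ (f := fun (q : ℚ) (_ : (q : ℝ) ∈ Ioo T (T + δ)) => ENNReal.ofReal |f T - f q|)
    q ⟨hs.1.trans hq.1, hq.2⟩

theorem ratRightOscillation_le_of_bddAbove (hf : BddAbove (range fun t => |f t|)) :
    ratRightOscillation f T δ ≤ ENNReal.ofReal (2 * ⨆ t, |f t|) :=
  iSup₂_le fun q _ => ENNReal.ofReal_le_ofReal <| by
    linarith [abs_sub (f T) (f q), le_ciSup hf T, le_ciSup hf (q : ℝ)]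

theorem tendsto_ratRightOscillation (hf : ContinuousWithinAt f (Ici T) T) :
    Tendsto (ratRightOscillation f T) (𝓝[>] 0) (𝓝 0) := by
  rw [ENNReal.tendsto_nhds_zero]
  intro η hη
  have hosc : ContinuousWithinAt (fun s => ENNReal.ofReal |f T - f s|) (Ici T) T :=
    ENNReal.continuous_ofReal.continuousAt.comp_continuousWithinAt
      (continuousWithinAt_const.sub hf).abs
  obtain ⟨u, hu, hsub⟩ := mem_nhdsGE_iff_exists_Ico_subset.1 <|
    hosc.eventually (gt_mem_nhds (by simpa using hη))
  filter_upwards [Ioo_mem_nhdsGT (show (0 : ℝ) < u - T by simpa using hu)] with δ hδ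
  exact iSup₂_le fun q hq => le_of_lt (hsub ⟨hq.1.le, by linarith [hq.2, hδ.2]⟩)

variable {Ω : Type*} {m0 : MeasurableSpace Ω}

theorem measurable_ratRightOscillation {Z : ℝ → Ω → ℝ} (hZ : ∀ t, Measurable (Z t)) :
    Measurable fun ω => ratRightOscillation (Z · ω) T δ :=
  Measurable.iSup fun q => Measurable.iSup fun _ => ((hZ T).sub (hZ q)).abs.ennreal_ofReal

end ratRightOscillation

theorem ofReal_norm_ite_le_ratRightOscillation {f : ℝ → ℝ} {T ε : ℝ} (hε : 0 < ε)
    (hf : ∀ s, ContinuousWithinAt f (Ici s) s) (x : ℝ) :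
    ENNReal.ofReal ‖if T < x then |f (min x T) - f (min x (T + ε))| else 0‖
      ≤ ratRightOscillation f T (2 * ε) := by
  -- `min x (T + ε)` may be the endpoint `T + ε`; going up to `T + 2 * ε` leaves room to its right.
  split_ifs with hx
  · rw [min_eq_right hx.le, norm_abs_eq_norm, Real.norm_eq_abs]
    exact ofReal_abs_sub_le_ratRightOscillation (hf _)
      ⟨lt_min hx (by linarith), by linarith [min_le_right x (T + ε)]⟩
  · simp

section

variable {Ω : Type*} {m0 : MeasurableSpace Ω} {μ : Measure Ω}

theorem ae_bddAbove_range_abs_of_abs_le_martingale [IsFiniteMeasure μ] {ℱ : Filtration ℝ m0}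
    {M Z : ℝ → Ω → ℝ} (hM : Martingale M ℱ μ) {C : ℝ≥0} (hC : ∀ t, eLpNorm (M t) 1 μ ≤ C)
    (hZM : ∀ t, ∀ᵐ ω ∂μ, |Z t ω| ≤ M t ω)
    (hZ : ∀ ω t, ContinuousWithinAt (fun s => Z s ω) (Ici t) t) :
    ∀ᵐ ω ∂μ, BddAbove (range fun t => |Z t ω|) := by
  obtain ⟨e, he⟩ := exists_surjective_nat ℚ
  filter_upwards [hM.ae_bddAbove_abs_seq hC fun k => (e k : ℝ), ae_all_iff.2 fun q : ℚ => hZM q]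
    with ω ⟨c, hc⟩ hZMω
  refine ⟨c, forall_mem_range.2 fun t => ?_⟩
  refine (hZ ω t).abs.mem_of_mapsTo_dense_Ioo Rat.denseRange_cast isClosed_Iic (lt_add_one t) ?_
  rintro _ ⟨-, q, rfl⟩
  obtain ⟨k, rfl⟩ := he q
  exact (hZMω _).trans ((le_abs_self _).trans (hc ⟨k, rfl⟩))

theorem iSup_integral_ite_le_ratRightOscillation {ι : Type*} {τ : ι → Ω → ℝ} {Z : ℝ → Ω → ℝ}
    {T ε : ℝ} (hε : 0 < ε) (hZ : ∀ ω t, ContinuousWithinAt (fun s => Z s ω) (Ici t) t)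
    (hfin : ∫⁻ ω, ratRightOscillation (Z · ω) T (2 * ε) ∂μ ≠ ∞) :
    ⨆ i, ∫ ω, (if T < τ i ω then |Z (min (τ i ω) T) ω - Z (min (τ i ω) (T + ε)) ω| else 0) ∂μ
      ≤ (∫⁻ ω, ratRightOscillation (Z · ω) T (2 * ε) ∂μ).toReal :=
  Real.iSup_le (fun _ => (le_abs_self _).trans <| (norm_integral_le_lintegral_norm _).trans <|
      ENNReal.toReal_mono hfin <|
        lintegral_mono fun ω => ofReal_norm_ite_le_ratRightOscillation hε (hZ ω) _)
    ENNReal.toReal_nonneg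

end

theorem stmt_5_general {Ω : Type*} {m0 : MeasurableSpace Ω} (P : Measure Ω) [IsProbabilityMeasure P]
    (ℱ : Filtration ℝ m0)
    (Z : ℝ → Ω → ℝ) (hadp : Adapted ℱ Z)
    (hrc : ∀ ω, ∀ t : ℝ, ContinuousWithinAt (fun s => Z s ω) (Set.Ici t) t)
    (M : ℝ → Ω → ℝ) (hM : Martingale M ℱ P) (hUI : UniformIntegrable M 1 P)
    (hbd : ∀ t, ∀ᵐ ω ∂P, |Z t ω| ≤ M t ω)
    (hsupint : Integrable (fun ω => ⨆ t : ℝ, |Z t ω|) P)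
    (T : ℝ) :
    Filter.limsup
      (fun ε : ℝ => ⨆ τ : {τ : Ω → ℝ // IsStoppingTime ℱ (fun ω => (τ ω : WithTop ℝ))},
        ∫ ω, (if T < τ.1 ω then |Z (min (τ.1 ω) T) ω - Z (min (τ.1 ω) (T + ε)) ω| else 0) ∂P)
      (nhdsWithin 0 (Set.Ioi 0)) = 0 := by
  obtain ⟨-, -, C, hC⟩ := hUI
  set w : ℝ → Ω → ℝ≥0∞ := fun ε ω => ratRightOscillation (Z · ω) T (2 * ε)
  have hbound : ∫⁻ ω, ENNReal.ofReal (2 * ⨆ t, |Z t ω|) ∂P ≠ ∞ :=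
    (hsupint.const_mul 2).lintegral_lt_top.ne
  have hw_le : ∀ ε, ∀ᵐ ω ∂P, w ε ω ≤ ENNReal.ofReal (2 * ⨆ t, |Z t ω|) := fun ε => by
    filter_upwards [ae_bddAbove_range_abs_of_abs_le_martingale hM hC hbd hrc] with ω hω
    exact ratRightOscillation_le_of_bddAbove hω
  have hw_tendsto : Tendsto (fun ε => ∫⁻ ω, w ε ω ∂P) (𝓝[>] 0) (𝓝 0) := by
    simpa using tendsto_lintegral_filter_of_dominated_convergence _
      (.of_forall fun _ => measurable_ratRightOscillation fun t => (hadp t).mono (ℱ.le t) le_rfl)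
      (.of_forall hw_le) hbound
      (.of_forall fun ω => (tendsto_ratRightOscillation (hrc ω T)).comp <|
        tendsto_iff_comap.2 (comap_mulLeft_nhdsGT_zero two_pos).ge)
  refine Tendsto.limsup_eq <| tendsto_of_tendsto_of_tendsto_of_le_of_le' tendsto_const_nhds
    (ENNReal.toReal_zero ▸ (ENNReal.tendsto_toReal ENNReal.zero_ne_top).comp hw_tendsto)
    (.of_forall fun ε => Real.iSup_nonneg fun τ => integral_nonneg fun ω => ?_)
    (eventually_nhdsWithin_of_forall fun ε hε => iSup_integral_ite_le_ratRightOscillation hε hrc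
      (ne_top_of_le_ne_top hbound (lintegral_mono_ae (hw_le ε))))
  positivity

/-- If `Z` is a right-continuous adapted process bounded in absolute value by a uniformly
integrable martingale `M`, then
`limsup_{ε↓0} sup_{τ stopping time} E[|Z(τ∧T) − Z(τ∧(T+ε))| 1_{T<τ}] = 0`. -/
theorem stmt_5 {Ω : Type*} {m0 : MeasurableSpace Ω} (P : Measure Ω) [IsProbabilityMeasure P]
    (ℱ : Filtration ℝ m0)
    (Z : ℝ → Ω → ℝ) (hadp : Adapted ℱ Z)
    (hrc : ∀ ω, ∀ t : ℝ, ContinuousWithinAt (fun s => Z s ω) (Set.Ici t) t)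
    (M : ℝ → Ω → ℝ) (hM : Martingale M ℱ P) (hUI : UniformIntegrable M 1 P)
    (hbd : ∀ t, ∀ᵐ ω ∂P, |Z t ω| ≤ M t ω)
    (hsupint : Integrable (fun ω => ⨆ t : ℝ, |Z t ω|) P)
    (T : ℝ) (hT : 0 < T) :
    Filter.limsup
      (fun ε : ℝ => ⨆ τ : {τ : Ω → ℝ // IsStoppingTime ℱ (fun ω => (τ ω : WithTop ℝ))},
        ∫ ω, (if T < τ.1 ω then |Z (min (τ.1 ω) T) ω - Z (min (τ.1 ω) (T + ε)) ω| else 0) ∂P)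
      (nhdsWithin 0 (Set.Ioi 0)) = 0 :=
  stmt_5_general P ℱ Z hadp hrc M hM hUI hbd hsupint T
end

section
/- Let γ₁ < 0 < 1 < γ₂ with γ₂ < 1 − γ₁, and let φ : ℝ₊ → [0,1] satisfy φ(x) ∼ a₂ x^{γ₂} as x ↓ 0 for some a₂ > 0. Then β[φ](b)/φ(b) → 1 + γ₂(γ₂−1)/((2γ₂−1)(1−γ₁−γ₂)) > 1 as b ↓ 0. -/
open MeasureTheory Set Filter

private lemma st10_Ioc_int {p : ℝ} (hp : -1 < p) :
    IntegrableOn (fun r : ℝ => r ^ p) (Ioc 0 1) := by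
  have h := intervalIntegral.intervalIntegrable_rpow' (a := 0) (b := 1) hp
  rwa [intervalIntegrable_iff, uIoc_of_le zero_le_one] at h

private lemma st10_Ioc_val {p : ℝ} (hp : -1 < p) :
    ∫ r in Ioc (0:ℝ) 1, r ^ p = (p + 1)⁻¹ := by
  rw [← intervalIntegral.integral_of_le zero_le_one, integral_rpow (Or.inl hp),
    Real.one_rpow, Real.zero_rpow (by linarith : p + 1 ≠ 0)]
  ring

private lemma st10_split {H : ℝ → ℝ} (h1 : IntegrableOn H (Ioc 0 1))
    (h2 : IntegrableOn H (Ioi 1)) :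
    IntegrableOn H (Ioi 0) ∧
      ∫ r in Ioi (0:ℝ), H r = (∫ r in Ioc (0:ℝ) 1, H r) + ∫ r in Ioi (1:ℝ), H r := by
  have hu : Ioc (0:ℝ) 1 ∪ Ioi 1 = Ioi 0 := Ioc_union_Ioi_eq_Ioi zero_le_one
  have hd : Disjoint (Ioc (0:ℝ) 1) (Ioi 1) := Ioc_disjoint_Ioi le_rfl
  refine ⟨?_, ?_⟩
  · rw [← hu]; exact h1.union h2
  · rw [← hu, setIntegral_union hd measurableSet_Ioi h1 h2]

/-- If `φ : ℝ₊ → [0,1]` satisfies `φ(x) ∼ a₂ x^{γ₂}` as `x ↓ 0`, then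
`β[φ](b)/φ(b) → 1 + γ₂(γ₂−1)/((2γ₂−1)(1−γ₁−γ₂)) > 1` as `b ↓ 0`, where
`β[φ](b) = ∫₀^∞ φ(br) f(r) dr`. -/
theorem stmt_10 (γ₁ γ₂ : ℝ) (hγ₁ : γ₁ < 0) (hγ₂ : 1 < γ₂) (hγ : γ₂ < 1 - γ₁)
    (f : ℝ → ℝ)
    (hf : ∀ r, f r = (γ₂ - γ₁)⁻¹ *
      ((if 0 < r ∧ r ≤ 1 then γ₂ * (γ₂ - 1) * r ^ (γ₂ - 2) else 0)
        + (if 1 < r then γ₁ * (γ₁ - 1) * r ^ (γ₁ - 2) else 0)))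
    (φ : ℝ → ℝ) (hφmeas : Measurable φ) (hφ01 : ∀ x, φ x ∈ Icc (0 : ℝ) 1)
    (a₂ : ℝ) (ha₂ : 0 < a₂)
    (hasymp : Tendsto (fun x => φ x / (a₂ * x ^ γ₂)) (nhdsWithin 0 (Ioi 0)) (nhds 1)) :
    Tendsto (fun b => (∫ r in Ioi (0 : ℝ), φ (b * r) * f r) / φ b)
        (nhdsWithin 0 (Ioi 0))
        (nhds (1 + γ₂ * (γ₂ - 1) / ((2 * γ₂ - 1) * (1 - γ₁ - γ₂))))
      ∧ 1 < 1 + γ₂ * (γ₂ - 1) / ((2 * γ₂ - 1) * (1 - γ₁ - γ₂)) := by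
  have hD : (0:ℝ) < γ₂ - γ₁ := by linarith
  have h2γ : (0:ℝ) < 2 * γ₂ - 1 := by linarith
  have h1γ : (0:ℝ) < 1 - γ₁ - γ₂ := by linarith
  have hγ2pos : (0:ℝ) < γ₂ := by linarith
  have hsecond : 1 < 1 + γ₂ * (γ₂ - 1) / ((2 * γ₂ - 1) * (1 - γ₁ - γ₂)) := by
    have : 0 < γ₂ * (γ₂ - 1) / ((2 * γ₂ - 1) * (1 - γ₁ - γ₂)) :=
      div_pos (by nlinarith) (by positivity)
    linarith
  refine ⟨?_, hsecond⟩
  set l := nhdsWithin (0:ℝ) (Ioi 0) with hl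
  -- basic facts about f
  have hf_nonneg : ∀ r, 0 ≤ f r := by
    intro r
    rw [hf r]
    have h1 : (0:ℝ) ≤ if 0 < r ∧ r ≤ 1 then γ₂ * (γ₂ - 1) * r ^ (γ₂ - 2) else 0 := by
      split_ifs with h
      · exact mul_nonneg (mul_nonneg hγ2pos.le (by linarith)) (Real.rpow_nonneg h.1.le _)
      · exact le_rfl
    have h2 : (0:ℝ) ≤ if 1 < r then γ₁ * (γ₁ - 1) * r ^ (γ₁ - 2) else 0 := by
      split_ifs with h
      · exact mul_nonneg (mul_nonneg_of_nonpos_of_nonpos hγ₁.le (by linarith))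
          (Real.rpow_nonneg (by linarith) _)
      · exact le_rfl
    exact mul_nonneg (inv_nonneg.2 hD.le) (add_nonneg h1 h2)
  have hf_meas : Measurable f := by
    have : f = fun r => (γ₂ - γ₁)⁻¹ *
        ((if 0 < r ∧ r ≤ 1 then γ₂ * (γ₂ - 1) * r ^ (γ₂ - 2) else 0)
          + (if 1 < r then γ₁ * (γ₁ - 1) * r ^ (γ₁ - 2) else 0)) := funext hf
    rw [this]
    refine measurable_const.mul (Measurable.add ?_ ?_)
    · exact Measurable.ite (by exact measurableSet_Ioc : MeasurableSet (Ioc (0:ℝ) 1))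
        (measurable_const.mul (by fun_prop : Measurable fun r : ℝ => r ^ (γ₂ - 2))) measurable_const
    · exact Measurable.ite measurableSet_Ioi
        (measurable_const.mul (by fun_prop : Measurable fun r : ℝ => r ^ (γ₁ - 2))) measurable_const
  -- the key integral computation
  have key : ∀ q : ℝ, -1 < γ₂ - 2 + q → γ₁ - 2 + q < -1 →
      IntegrableOn (fun r => r ^ q * f r) (Ioi 0) ∧
        ∫ r in Ioi (0:ℝ), r ^ q * f r
          = (γ₂ - γ₁)⁻¹ * (γ₂ * (γ₂ - 1) * (γ₂ - 1 + q)⁻¹ - γ₁ * (γ₁ - 1) * (γ₁ - 1 + q)⁻¹) := by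
    intro q hq1 hq2
    have e1 : EqOn (fun r : ℝ => (γ₂ - γ₁)⁻¹ * (γ₂ * (γ₂ - 1)) * r ^ (γ₂ - 2 + q))
        (fun r => r ^ q * f r) (Ioc 0 1) := by
      intro r hr
      simp only
      rw [hf r, if_pos ⟨hr.1, hr.2⟩, if_neg (not_lt.2 hr.2), add_zero,
        Real.rpow_add hr.1]
      ring
    have e2 : EqOn (fun r : ℝ => (γ₂ - γ₁)⁻¹ * (γ₁ * (γ₁ - 1)) * r ^ (γ₁ - 2 + q))
        (fun r => r ^ q * f r) (Ioi 1) := by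
      intro r hr
      simp only
      have hr1 : (1:ℝ) < r := hr
      rw [hf r, if_neg (by push_neg; intro h; linarith), if_pos hr1, zero_add,
        Real.rpow_add (by linarith : (0:ℝ) < r)]
      ring
    have i1 : IntegrableOn (fun r => r ^ q * f r) (Ioc 0 1) :=
      IntegrableOn.congr_fun (Integrable.const_mul (st10_Ioc_int hq1) _) e1 measurableSet_Ioc
    have i2 : IntegrableOn (fun r => r ^ q * f r) (Ioi 1) :=
      IntegrableOn.congr_fun (Integrable.const_mul (integrableOn_Ioi_rpow_of_lt hq2 zero_lt_one) _)
        e2 measurableSet_Ioi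
    obtain ⟨hint, hval⟩ := st10_split i1 i2
    refine ⟨hint, ?_⟩
    rw [hval, ← setIntegral_congr_fun measurableSet_Ioc e1,
      ← setIntegral_congr_fun measurableSet_Ioi e2,
      integral_const_mul, integral_const_mul, st10_Ioc_val hq1,
      integral_Ioi_rpow_of_lt hq2 zero_lt_one, Real.one_rpow]
    have hne1 : γ₂ - 2 + q + 1 = γ₂ - 1 + q := by ring
    have hne2 : γ₁ - 2 + q + 1 = γ₁ - 1 + q := by ring
    rw [hne1, hne2]
    ring
  -- integrability of f
  have hf_int : IntegrableOn f (Ioi (0:ℝ)) := by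
    have h := key 0 (by linarith) (by linarith)
    have : EqOn (fun r : ℝ => r ^ (0:ℝ) * f r) f (Ioi 0) := by
      intro r hr
      simp only
      rw [Real.rpow_zero, one_mul]
    exact h.1.congr_fun this measurableSet_Ioi
  -- cutoff exponent θ
  set θ : ℝ := (γ₂ / (1 - γ₁) + 1) / 2 with hθdef
  have h1γ₁ : (0:ℝ) < 1 - γ₁ := by linarith
  have hθlt : γ₂ / (1 - γ₁) < θ := by
    have h : γ₂ / (1 - γ₁) < 1 := (div_lt_one h1γ₁).2 (by linarith)
    rw [hθdef]; linarith
  have hθ1 : θ < 1 := by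
    have h : γ₂ / (1 - γ₁) < 1 := (div_lt_one h1γ₁).2 (by linarith)
    rw [hθdef]; linarith
  have hθpos : 0 < θ := by
    have h0 : 0 < γ₂ / (1 - γ₁) := div_pos hγ2pos h1γ₁
    rw [hθdef]; linarith
  have he : 0 < θ * (1 - γ₁) - γ₂ := by
    have h := (div_lt_iff₀ h1γ₁).1 hθlt
    linarith
  -- rpow limits
  have hrpow0 : ∀ p : ℝ, 0 < p → Tendsto (fun b : ℝ => b ^ p) l (nhds 0) := by
    intro p hp
    have hc : ContinuousAt (fun b : ℝ => b ^ p) 0 :=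
      Real.continuousAt_rpow_const 0 p (Or.inr hp.le)
    have h : Tendsto (fun b : ℝ => b ^ p) l (nhds ((0:ℝ) ^ p)) :=
      hc.tendsto.mono_left nhdsWithin_le_nhds
    rwa [Real.zero_rpow hp.ne'] at h
  have hTtop : Tendsto (fun b : ℝ => b ^ (-θ)) l atTop := by
    have h1 : Tendsto (fun b : ℝ => b ^ θ) l (nhdsWithin 0 (Ioi 0)) := by
      apply tendsto_nhdsWithin_of_tendsto_nhds_of_eventually_within _ (hrpow0 θ hθpos)
      filter_upwards [self_mem_nhdsWithin] with b hb
      exact Real.rpow_pos_of_pos hb θ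
    have h2 := tendsto_inv_nhdsGT_zero.comp h1
    apply h2.congr'
    filter_upwards [self_mem_nhdsWithin] with b hb
    simp only [Function.comp_apply]
    rw [← Real.rpow_neg (le_of_lt hb)]
  -- δ from the asymptotics
  obtain ⟨δ, hδpos, hδ⟩ : ∃ δ ∈ Ioi (0:ℝ), Ioo 0 δ ⊆ {x | φ x / (a₂ * x ^ γ₂) < 2} :=
    mem_nhdsGT_iff_exists_Ioo_subset.1 (hasymp.eventually_lt_const one_lt_two)
  have hδ0 : (0:ℝ) < δ := hδpos
  -- main and tail pieces
  set F : ℝ → ℝ → ℝ :=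
    fun b r => if r ≤ b ^ (-θ) then φ (b * r) / (a₂ * b ^ γ₂) * f r else 0 with hF
  set Gt : ℝ → ℝ → ℝ :=
    fun b r => if b ^ (-θ) < r then φ (b * r) * f r else 0 with hGt
  have hFb_meas : ∀ b : ℝ, AEStronglyMeasurable (F b) (volume.restrict (Ioi 0)) := by
    intro b
    apply Measurable.aestronglyMeasurable
    rw [hF]
    exact Measurable.ite measurableSet_Iic
      (((hφmeas.comp (measurable_id.const_mul b)).div_const _).mul hf_meas) measurable_const
  have hGb_meas : ∀ b : ℝ, Measurable (Gt b) := by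
    intro b
    rw [hGt]
    exact Measurable.ite measurableSet_Ioi
      ((hφmeas.comp (measurable_id.const_mul b)).mul hf_meas) measurable_const
  have hGint : ∀ b, Integrable (Gt b) (volume.restrict (Ioi 0)) := by
    intro b
    apply hf_int.mono' (hGb_meas b).aestronglyMeasurable
    rw [ae_restrict_iff' measurableSet_Ioi]
    apply Eventually.of_forall
    intro r hr
    rw [hGt]
    simp only
    split_ifs with h
    · rw [Real.norm_eq_abs, abs_of_nonneg (mul_nonneg (hφ01 _).1 (hf_nonneg r))]
      calc φ (b * r) * f r ≤ 1 * f r :=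
            mul_le_mul_of_nonneg_right (hφ01 _).2 (hf_nonneg r)
        _ = f r := one_mul _
    · simpa using hf_nonneg r
  -- bound integrable
  have hbound_int : Integrable (fun r => 2 * (r ^ γ₂ * f r)) (volume.restrict (Ioi 0)) :=
    (key γ₂ (by linarith) (by linarith)).1.const_mul 2
  have hδev : ∀ᶠ b in l, b ^ (1 - θ) < δ :=
    (hrpow0 (1 - θ) (by linarith)).eventually_lt_const hδ0
  -- dominated convergence for the main part
  have h_bound : ∀ᶠ b in l, ∀ᵐ r ∂(volume.restrict (Ioi 0)),
      ‖F b r‖ ≤ 2 * (r ^ γ₂ * f r) := by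
    filter_upwards [self_mem_nhdsWithin, hδev] with b hb hbδ
    rw [ae_restrict_iff' measurableSet_Ioi]
    apply Eventually.of_forall
    intro r hr
    have hr0 : (0:ℝ) < r := hr
    have hb0 : (0:ℝ) < b := hb
    have hbnd0 : (0:ℝ) ≤ 2 * (r ^ γ₂ * f r) :=
      mul_nonneg (by norm_num) (mul_nonneg (Real.rpow_nonneg hr0.le _) (hf_nonneg r))
    rw [hF]
    simp only
    split_ifs with hcase
    · have hcpos : (0:ℝ) < a₂ * b ^ γ₂ := by positivity
      have hbr : b * r ∈ Ioo 0 δ := by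
        constructor
        · positivity
        · have h1 : b * r ≤ b * b ^ (-θ) := mul_le_mul_of_nonneg_left hcase hb0.le
          have h2 : b * b ^ (-θ) = b ^ (1 - θ) := by
            rw [show (1:ℝ) - θ = 1 + -θ by ring, Real.rpow_add hb0, Real.rpow_one]
          linarith
      have hlt := hδ hbr
      have hbrpos : (0:ℝ) < a₂ * (b * r) ^ γ₂ :=
        mul_pos ha₂ (Real.rpow_pos_of_pos (mul_pos hb0 hr0) _)
      have hφle : φ (b * r) ≤ 2 * (a₂ * (b * r) ^ γ₂) := le_of_lt ((div_lt_iff₀ hbrpos).1 hlt)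
      have hmul : (b * r) ^ γ₂ = b ^ γ₂ * r ^ γ₂ := Real.mul_rpow hb0.le hr0.le
      have hdiv : φ (b * r) / (a₂ * b ^ γ₂) ≤ 2 * r ^ γ₂ := by
        rw [div_le_iff₀ hcpos]
        calc φ (b * r) ≤ 2 * (a₂ * (b * r) ^ γ₂) := hφle
          _ = 2 * r ^ γ₂ * (a₂ * b ^ γ₂) := by rw [hmul]; ring
      rw [Real.norm_eq_abs, abs_of_nonneg
        (mul_nonneg (div_nonneg (hφ01 _).1 hcpos.le) (hf_nonneg r))]
      calc φ (b * r) / (a₂ * b ^ γ₂) * f r ≤ 2 * r ^ γ₂ * f r :=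
            mul_le_mul_of_nonneg_right hdiv (hf_nonneg r)
        _ = 2 * (r ^ γ₂ * f r) := by ring
    · simpa using hbnd0
  have h_lim : ∀ᵐ r ∂(volume.restrict (Ioi 0)),
      Tendsto (fun b => F b r) l (nhds (r ^ γ₂ * f r)) := by
    rw [ae_restrict_iff' measurableSet_Ioi]
    apply Eventually.of_forall
    intro r hr
    have hr0 : (0:ℝ) < r := hr
    have h1 : Tendsto (fun b : ℝ => b * r) l (nhdsWithin 0 (Ioi 0)) := by
      apply tendsto_nhdsWithin_of_tendsto_nhds_of_eventually_within
      · have h := (tendsto_id.mul_const r :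
          Tendsto (fun b : ℝ => b * r) (nhds 0) (nhds (0 * r)))
        rw [zero_mul] at h
        exact h.mono_left nhdsWithin_le_nhds
      · filter_upwards [self_mem_nhdsWithin] with b hb
        exact mul_pos hb hr0
    have h2 : Tendsto (fun b => φ (b * r) / (a₂ * (b * r) ^ γ₂) * (r ^ γ₂ * f r)) l
        (nhds (1 * (r ^ γ₂ * f r))) := (hasymp.comp h1).mul_const _
    rw [one_mul] at h2
    apply h2.congr'
    filter_upwards [self_mem_nhdsWithin, hTtop.eventually_ge_atTop r] with b hb hbr
    have hb0 : (0:ℝ) < b := hb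
    rw [hF]
    simp only
    rw [if_pos hbr, Real.mul_rpow hb0.le hr0.le]
    have h3 : r ^ γ₂ ≠ 0 := (Real.rpow_pos_of_pos hr0 _).ne'
    have h4 : a₂ * b ^ γ₂ ≠ 0 := by positivity
    have h5 : b ^ γ₂ ≠ 0 := (Real.rpow_pos_of_pos hb0 _).ne'
    field_simp
  have hmain : Tendsto (fun b => ∫ r in Ioi (0:ℝ), F b r) l
      (nhds (∫ r in Ioi (0:ℝ), r ^ γ₂ * f r)) :=
    tendsto_integral_filter_of_dominated_convergence _
      (Eventually.of_forall hFb_meas) h_bound hbound_int h_lim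
  have hIval : ∫ r in Ioi (0:ℝ), r ^ γ₂ * f r
      = 1 + γ₂ * (γ₂ - 1) / ((2 * γ₂ - 1) * (1 - γ₁ - γ₂)) := by
    rw [(key γ₂ (by linarith) (by linarith)).2,
      show γ₂ - 1 + γ₂ = 2 * γ₂ - 1 by ring,
      show γ₁ - 1 + γ₂ = -(1 - γ₁ - γ₂) by ring, inv_neg]
    field_simp [hD.ne', h2γ.ne', h1γ.ne']
    have hb2 := mul_inv_cancel₀ h2γ.ne'
    linear_combination (-γ₂ * (γ₂ - 1)) * hb2
  -- the tail estimate
  set K : ℝ := (γ₂ - γ₁)⁻¹ * (γ₁ * (γ₁ - 1)) * (1 - γ₁)⁻¹ with hK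
  have htail_le : ∀ b ∈ Ioo (0:ℝ) 1, (0 ≤ ∫ r in Ioi (0:ℝ), Gt b r) ∧
      (∫ r in Ioi (0:ℝ), Gt b r) ≤ K * b ^ (θ * (1 - γ₁)) := by
    intro b hb
    have hb0 : (0:ℝ) < b := hb.1
    have hT0 : (0:ℝ) < b ^ (-θ) := Real.rpow_pos_of_pos hb0 _
    have hT1 : (1:ℝ) < b ^ (-θ) := by
      rw [Real.rpow_neg hb0.le]
      rw [one_lt_inv_iff₀]
      exact ⟨Real.rpow_pos_of_pos hb0 _, Real.rpow_lt_one hb0.le hb.2 hθpos⟩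
    have hGnonneg : ∀ r, 0 ≤ Gt b r := by
      intro r
      rw [hGt]
      simp only
      split_ifs with h
      · exact mul_nonneg (hφ01 _).1 (hf_nonneg r)
      · exact le_rfl
    have h0 : 0 ≤ ∫ r in Ioi (0:ℝ), Gt b r :=
      setIntegral_nonneg measurableSet_Ioi fun r _ => hGnonneg r
    refine ⟨h0, ?_⟩
    have hsub : Ioi (b ^ (-θ)) ⊆ Ioi (0:ℝ) := Ioi_subset_Ioi hT0.le
    have hfT : IntegrableOn f (Ioi (b ^ (-θ))) := hf_int.mono_set hsub
    have hind_int : Integrable ((Ioi (b ^ (-θ))).indicator f) (volume.restrict (Ioi 0)) := by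
      rw [integrable_indicator_iff measurableSet_Ioi, IntegrableOn,
        Measure.restrict_restrict measurableSet_Ioi,
        inter_eq_self_of_subset_left hsub]
      exact hfT
    have hle2 : ∀ r, Gt b r ≤ (Ioi (b ^ (-θ))).indicator f r := by
      intro r
      rw [hGt]
      simp only [indicator_apply, mem_Ioi]
      split_ifs with h
      · calc φ (b * r) * f r ≤ 1 * f r :=
            mul_le_mul_of_nonneg_right (hφ01 _).2 (hf_nonneg r)
          _ = f r := one_mul _
      · exact le_rfl
    have hmono := integral_mono (hGint b) hind_int hle2
    have hindval : ∫ r in Ioi (0:ℝ), (Ioi (b ^ (-θ))).indicator f r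
        = ∫ r in Ioi (b ^ (-θ)), f r := by
      rw [integral_indicator measurableSet_Ioi,
        Measure.restrict_restrict measurableSet_Ioi,
        inter_eq_self_of_subset_left hsub]
    have e : EqOn (fun r : ℝ => (γ₂ - γ₁)⁻¹ * (γ₁ * (γ₁ - 1)) * r ^ (γ₁ - 2)) f
        (Ioi (b ^ (-θ))) := by
      intro r hr
      have h1r : (1:ℝ) < r := lt_trans hT1 hr
      simp only
      rw [hf r, if_neg (by push_neg; intro h; linarith), if_pos h1r, zero_add]
      ring
    have hval2 : ∫ r in Ioi (b ^ (-θ)), f r = K * b ^ (θ * (1 - γ₁)) := by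
      rw [← setIntegral_congr_fun measurableSet_Ioi e, integral_const_mul,
        integral_Ioi_rpow_of_lt (by linarith) hT0,
        show γ₁ - 2 + 1 = γ₁ - 1 by ring]
      have hTb : (b ^ (-θ)) ^ (γ₁ - 1) = b ^ (θ * (1 - γ₁)) := by
        rw [← Real.rpow_mul hb0.le, show -θ * (γ₁ - 1) = θ * (1 - γ₁) by ring]
      rw [hTb, hK]
      have hne : γ₁ - 1 ≠ 0 := by linarith
      field_simp
      ring
    calc (∫ r in Ioi (0:ℝ), Gt b r) ≤ ∫ r in Ioi (0:ℝ), (Ioi (b ^ (-θ))).indicator f r := hmono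
      _ = K * b ^ (θ * (1 - γ₁)) := by rw [hindval, hval2]
  have htail : Tendsto (fun b => (∫ r in Ioi (0:ℝ), Gt b r) / (a₂ * b ^ γ₂)) l (nhds 0) := by
    have hUtend : Tendsto (fun b : ℝ => K / a₂ * b ^ (θ * (1 - γ₁) - γ₂)) l (nhds 0) := by
      have h := (hrpow0 _ he).const_mul (K / a₂)
      rwa [mul_zero] at h
    apply tendsto_of_tendsto_of_tendsto_of_le_of_le' tendsto_const_nhds hUtend
    · filter_upwards [Ioo_mem_nhdsGT_of_mem ⟨le_refl (0:ℝ), zero_lt_one⟩] with b hb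
      exact div_nonneg (htail_le b hb).1
        (mul_nonneg ha₂.le (Real.rpow_nonneg hb.1.le _))
    · filter_upwards [Ioo_mem_nhdsGT_of_mem ⟨le_refl (0:ℝ), zero_lt_one⟩] with b hb
      have hb0 : (0:ℝ) < b := hb.1
      have hcpos : (0:ℝ) < a₂ * b ^ γ₂ := by positivity
      rw [div_le_iff₀ hcpos]
      calc (∫ r in Ioi (0:ℝ), Gt b r) ≤ K * b ^ (θ * (1 - γ₁)) := (htail_le b hb).2
        _ = K / a₂ * b ^ (θ * (1 - γ₁) - γ₂) * (a₂ * b ^ γ₂) := by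
            rw [Real.rpow_sub hb0]
            have h5 : b ^ γ₂ ≠ 0 := (Real.rpow_pos_of_pos hb0 _).ne'
            field_simp
  -- splitting the integral
  have hsplit : ∀ᶠ b in l, (∫ r in Ioi (0:ℝ), φ (b * r) * f r) / (a₂ * b ^ γ₂)
      = (∫ r in Ioi (0:ℝ), F b r) + (∫ r in Ioi (0:ℝ), Gt b r) / (a₂ * b ^ γ₂) := by
    filter_upwards [self_mem_nhdsWithin] with b hb
    have hb0 : (0:ℝ) < b := hb
    have hcpos : (0:ℝ) < a₂ * b ^ γ₂ := by positivity
    have hFint : Integrable (F b) (volume.restrict (Ioi 0)) := by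
      apply (hf_int.const_mul (a₂ * b ^ γ₂)⁻¹).mono' (hFb_meas b)
      rw [ae_restrict_iff' measurableSet_Ioi]
      apply Eventually.of_forall
      intro r hr
      rw [hF]
      simp only
      split_ifs with h
      · rw [Real.norm_eq_abs, abs_of_nonneg
          (mul_nonneg (div_nonneg (hφ01 _).1 hcpos.le) (hf_nonneg r))]
        refine mul_le_mul_of_nonneg_right ?_ (hf_nonneg r)
        calc φ (b * r) / (a₂ * b ^ γ₂) = φ (b * r) * (a₂ * b ^ γ₂)⁻¹ := div_eq_mul_inv _ _
          _ ≤ 1 * (a₂ * b ^ γ₂)⁻¹ :=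
            mul_le_mul_of_nonneg_right (hφ01 _).2 (inv_nonneg.2 hcpos.le)
          _ = (a₂ * b ^ γ₂)⁻¹ := one_mul _
      · simpa using mul_nonneg (inv_nonneg.2 hcpos.le) (hf_nonneg r)
    have hpt : ∀ r, φ (b * r) * f r = F b r * (a₂ * b ^ γ₂) + Gt b r := by
      intro r
      rw [hF, hGt]
      simp only
      by_cases hr : r ≤ b ^ (-θ)
      · rw [if_pos hr, if_neg (not_lt.2 hr), add_zero]
        field_simp
      · rw [if_neg hr, if_pos (not_le.1 hr), zero_mul, zero_add]
    calc (∫ r in Ioi (0:ℝ), φ (b * r) * f r) / (a₂ * b ^ γ₂)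
        = ((∫ r in Ioi (0:ℝ), F b r * (a₂ * b ^ γ₂)) + ∫ r in Ioi (0:ℝ), Gt b r)
            / (a₂ * b ^ γ₂) := by
          rw [← integral_add (hFint.mul_const _) (hGint b)]
          congr 1
          exact setIntegral_congr_fun measurableSet_Ioi fun r _ => hpt r
      _ = (∫ r in Ioi (0:ℝ), F b r) + (∫ r in Ioi (0:ℝ), Gt b r) / (a₂ * b ^ γ₂) := by
          rw [integral_mul_const, add_div, mul_div_cancel_right₀ _ hcpos.ne']
  have hnum : Tendsto (fun b => (∫ r in Ioi (0:ℝ), φ (b * r) * f r) / (a₂ * b ^ γ₂)) l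
      (nhds (1 + γ₂ * (γ₂ - 1) / ((2 * γ₂ - 1) * (1 - γ₁ - γ₂)))) := by
    have h := hmain.add htail
    rw [hIval, add_zero] at h
    exact h.congr' (hsplit.mono fun b hb => hb.symm)
  have hratio := hnum.div hasymp one_ne_zero
  rw [div_one] at hratio
  apply hratio.congr'
  filter_upwards [self_mem_nhdsWithin] with b hb
  have hb0 : (0:ℝ) < b := hb
  have hcne : (a₂ * b ^ γ₂) ≠ 0 := (mul_pos ha₂ (Real.rpow_pos_of_pos hb0 _)).ne'
  simp only [Pi.div_apply]
  rw [div_div_div_cancel_right₀ hcne]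
end

section
/- Let γ₁ < 0 < 1 < γ₂ with γ₂ < 1 − γ₁ and let φ : ℝ₊ → [0,1] be continuous with φ(x) ∼ a₂ x^{γ₂} as x ↓ 0 and φ(x) ∼ 1 − a₁ x^{γ₁} as x → ∞ (a₁, a₂ > 0). Then there exists b > 0 with β[φ](b) = φ(b). -/
open MeasureTheory Set Filter Topology

private lemma aux_Ioc_int {q : ℝ} (hq : -1 < q) :
    IntegrableOn (fun r : ℝ => r ^ q) (Ioc 0 1) ∧
      (∫ r in Ioc (0:ℝ) 1, r ^ q) = 1 / (q + 1) := by
  have hi : IntervalIntegrable (fun x : ℝ => x ^ q) volume 0 1 :=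
    intervalIntegral.intervalIntegrable_rpow' hq
  refine ⟨(intervalIntegrable_iff_integrableOn_Ioc_of_le zero_le_one).mp hi, ?_⟩
  rw [← intervalIntegral.integral_of_le zero_le_one, integral_rpow (Or.inl hq),
    Real.zero_rpow (by linarith), Real.one_rpow]
  ring

private lemma aux_Ioi_int {q : ℝ} (hq : q < -1) :
    IntegrableOn (fun r : ℝ => r ^ q) (Ioi 1) ∧
      (∫ r in Ioi (1:ℝ), r ^ q) = -(1 / (q + 1)) := by
  refine ⟨integrableOn_Ioi_rpow_of_lt hq one_pos, ?_⟩
  rw [integral_Ioi_rpow_of_lt hq one_pos, Real.one_rpow]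
  ring

set_option maxHeartbeats 800000 in
/-- Existence of a fixed point of `β[φ]`: if `φ : ℝ₊ → [0,1]` is continuous with
`φ(x) ∼ a₂ x^{γ₂}` as `x ↓ 0` and `φ(x) ∼ 1 − a₁ x^{γ₁}` as `x → ∞`, then there exists
`b > 0` with `β[φ](b) = φ(b)`, where `β[φ](b) = ∫₀^∞ φ(br) f(r) dr`. -/
theorem stmt_12 (γ₁ γ₂ : ℝ) (hγ₁ : γ₁ < 0) (hγ₂ : 1 < γ₂) (hγ : γ₂ < 1 - γ₁)
    (f : ℝ → ℝ)
    (hf : ∀ r, f r = (γ₂ - γ₁)⁻¹ *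
      ((if 0 < r ∧ r ≤ 1 then γ₂ * (γ₂ - 1) * r ^ (γ₂ - 2) else 0)
        + (if 1 < r then γ₁ * (γ₁ - 1) * r ^ (γ₁ - 2) else 0)))
    (φ : ℝ → ℝ) (hφcont : Continuous φ) (hφ01 : ∀ x, φ x ∈ Icc (0 : ℝ) 1)
    (a₁ a₂ : ℝ) (ha₁ : 0 < a₁) (ha₂ : 0 < a₂)
    (hasymp0 : Tendsto (fun x => φ x / (a₂ * x ^ γ₂)) (nhdsWithin 0 (Ioi 0)) (nhds 1))
    (hasympI : Tendsto (fun x => (1 - φ x) / (a₁ * x ^ γ₁)) atTop (nhds 1)) :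
    ∃ b : ℝ, 0 < b ∧ (∫ r in Ioi (0 : ℝ), φ (b * r) * f r) = φ b := by
  have hcpos : (0:ℝ) < γ₂ - γ₁ := by linarith
  set c := (γ₂ - γ₁)⁻¹ with hc_def
  have hcpos' : 0 < c := inv_pos.mpr hcpos
  have hA : (0:ℝ) < γ₂ * (γ₂ - 1) := by nlinarith
  have hB : (0:ℝ) < γ₁ * (γ₁ - 1) := by nlinarith
  have hφ0 : ∀ x, 0 ≤ φ x := fun x => (hφ01 x).1
  have hφ1 : ∀ x, φ x ≤ 1 := fun x => (hφ01 x).2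
  have hfIoc : ∀ r ∈ Ioc (0:ℝ) 1, f r = c * (γ₂ * (γ₂-1)) * r ^ (γ₂ - 2) := by
    intro r hr
    rw [hf r, if_pos ⟨hr.1, hr.2⟩, if_neg (not_lt.mpr hr.2)]
    ring
  have hfIoi : ∀ r ∈ Ioi (1:ℝ), f r = c * (γ₁ * (γ₁-1)) * r ^ (γ₁ - 2) := by
    intro r hr
    rw [hf r, if_neg (fun h => absurd h.2 (not_le.mpr hr)), if_pos (show (1:ℝ) < r from hr)]
    ring
  have hf0 : ∀ r, 0 ≤ f r := by
    intro r
    rw [hf r]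
    have h1 : (0:ℝ) ≤ (if 0 < r ∧ r ≤ 1 then γ₂ * (γ₂ - 1) * r ^ (γ₂ - 2) else 0) := by
      split_ifs with h
      · exact mul_nonneg hA.le (Real.rpow_nonneg h.1.le _)
      · exact le_refl 0
    have h2 : (0:ℝ) ≤ (if 1 < r then γ₁ * (γ₁ - 1) * r ^ (γ₁ - 2) else 0) := by
      split_ifs with h
      · exact mul_nonneg hB.le (Real.rpow_nonneg (by linarith) _)
      · exact le_refl 0
    exact mul_nonneg hcpos'.le (add_nonneg h1 h2)
  have hfm : Measurable f := by
    have : f = fun r => c *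
        ((if 0 < r ∧ r ≤ 1 then γ₂ * (γ₂ - 1) * r ^ (γ₂ - 2) else 0)
          + (if 1 < r then γ₁ * (γ₁ - 1) * r ^ (γ₁ - 2) else 0)) := funext hf
    rw [this]
    refine measurable_const.mul (Measurable.add ?_ ?_)
    · refine Measurable.ite measurableSet_Ioc ?_ measurable_const
      measurability
    · refine Measurable.ite measurableSet_Ioi ?_ measurable_const
      measurability
  -- weighted integrals of f
  have key : ∀ p : ℝ, -1 < γ₂ - 2 + p → γ₁ - 2 + p < -1 →
      IntegrableOn (fun r => r ^ p * f r) (Ioi (0:ℝ)) ∧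
      (∫ r in Ioi (0:ℝ), r ^ p * f r)
        = c * (γ₂ * (γ₂-1)) * (1/(γ₂ - 1 + p)) + c * (γ₁ * (γ₁-1)) * (-(1/(γ₁ - 1 + p))) := by
    intro p hp1 hp2
    have e1 : EqOn (fun r : ℝ => r ^ p * f r)
        (fun r : ℝ => c * (γ₂*(γ₂-1)) * r ^ (γ₂ - 2 + p)) (Ioc 0 1) := by
      intro r hr
      simp only
      rw [hfIoc r hr, Real.rpow_add hr.1]
      ring
    have e2 : EqOn (fun r : ℝ => r ^ p * f r)
        (fun r : ℝ => c * (γ₁*(γ₁-1)) * r ^ (γ₁ - 2 + p)) (Ioi 1) := by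
      intro r hr
      simp only
      rw [hfIoi r hr, Real.rpow_add (lt_trans one_pos hr)]
      ring
    have i1 : IntegrableOn (fun r : ℝ => r ^ p * f r) (Ioc (0:ℝ) 1) :=
      IntegrableOn.congr_fun ((aux_Ioc_int hp1).1.const_mul _)
        (fun r hr => (e1 hr).symm) measurableSet_Ioc
    have i2 : IntegrableOn (fun r : ℝ => r ^ p * f r) (Ioi (1:ℝ)) :=
      IntegrableOn.congr_fun ((aux_Ioi_int hp2).1.const_mul _)
        (fun r hr => (e2 hr).symm) measurableSet_Ioi
    have hsplit : Ioc (0:ℝ) 1 ∪ Ioi 1 = Ioi 0 := Ioc_union_Ioi_eq_Ioi zero_le_one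
    constructor
    · rw [← hsplit]; exact i1.union i2
    · rw [← hsplit, setIntegral_union (Ioc_disjoint_Ioi le_rfl) measurableSet_Ioi i1 i2,
        setIntegral_congr_fun measurableSet_Ioc e1, setIntegral_congr_fun measurableSet_Ioi e2,
        integral_const_mul, integral_const_mul, (aux_Ioc_int hp1).2, (aux_Ioi_int hp2).2,
        show γ₂ - 2 + p + 1 = γ₂ - 1 + p by ring, show γ₁ - 2 + p + 1 = γ₁ - 1 + p by ring]
  have hf_eq : (fun r : ℝ => r ^ (0:ℝ) * f r) = f := by
    funext r; simp [Real.rpow_zero]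
  have hf_int : IntegrableOn f (Ioi (0:ℝ)) := by
    have h := (key 0 (by linarith) (by linarith)).1
    rwa [hf_eq] at h
  have hf_mass : (∫ r in Ioi (0:ℝ), f r) = 1 := by
    have h := (key 0 (by linarith) (by linarith)).2
    rw [hf_eq] at h
    rw [h, show γ₂ - 1 + 0 = γ₂ - 1 by ring, show γ₁ - 1 + 0 = γ₁ - 1 by ring,
      mul_assoc c, mul_assoc c,
      show γ₂ * (γ₂-1) * (1/(γ₂-1)) = γ₂ by field_simp [show γ₂-(1:ℝ) ≠ 0 by linarith],
      show γ₁ * (γ₁-1) * (-(1/(γ₁-1))) = -γ₁ by rw [mul_neg, neg_eq_iff_eq_neg]; field_simp [show γ₁-(1:ℝ) ≠ 0 by linarith],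
      show c * γ₂ + c * -γ₁ = c * (γ₂ - γ₁) by ring, hc_def, inv_mul_cancel₀ hcpos.ne']
  -- the constant M > 1
  have hMkey := key γ₂ (by linarith) (by linarith)
  have hM1 : 1 < ∫ r in Ioi (0:ℝ), r ^ γ₂ * f r := by
    rw [hMkey.2]
    have hd1 : (0:ℝ) < γ₂ - 1 + γ₂ := by linarith
    have hd2 : (0:ℝ) < -(γ₁ - 1 + γ₂) := by linarith
    have hD : (0:ℝ) < (γ₂-γ₁)*((γ₂-1+γ₂)*(-(γ₁-1+γ₂))) := mul_pos hcpos (mul_pos hd1 hd2)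
    have e : c * (γ₂*(γ₂-1)) * (1/(γ₂-1+γ₂)) + c*(γ₁*(γ₁-1))*(-(1/(γ₁-1+γ₂)))
        = (γ₂*(γ₂-1)*(-(γ₁-1+γ₂)) + γ₁*(γ₁-1)*(γ₂-1+γ₂)) /
          ((γ₂-γ₁)*((γ₂-1+γ₂)*(-(γ₁-1+γ₂)))) := by
      rw [hc_def, eq_div_iff hD.ne']
      field_simp [hcpos.ne', hd1.ne', show γ₁-1+γ₂ ≠ 0 by intro h'; rw [h'] at hd2; norm_num at hd2]
      ring
    rw [e, lt_div_iff₀ hD]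
    nlinarith [mul_pos hA hcpos]
  -- global bound φ x ≤ C x^γ₂
  have hCex : ∃ C : ℝ, 0 < C ∧ ∀ x : ℝ, 0 < x → φ x ≤ C * x ^ γ₂ := by
    have h2 : ∀ᶠ x in 𝓝[>] (0:ℝ), φ x / (a₂ * x ^ γ₂) < 2 :=
      hasymp0.eventually_lt_const one_lt_two
    rw [eventually_nhdsWithin_iff] at h2
    obtain ⟨ε, hε, hball⟩ := Metric.eventually_nhds_iff.mp h2
    refine ⟨2*a₂ + (ε/2) ^ (-γ₂), by positivity, fun x hx => ?_⟩
    have hxp : 0 < x ^ γ₂ := Real.rpow_pos_of_pos hx _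
    rcases lt_or_ge x (ε/2) with hlt | hge
    · have hb := hball (y := x) (by rw [Real.dist_eq, sub_zero, abs_of_pos hx]; linarith) hx
      have h3 : φ x < 2 * (a₂ * x ^ γ₂) := by
        rw [div_lt_iff₀ (by positivity)] at hb; linarith
      have h4 : 0 ≤ (ε/2) ^ (-γ₂) * x ^ γ₂ := by positivity
      nlinarith
    · have h5 : 1 ≤ (ε/2) ^ (-γ₂) * x ^ γ₂ := by
        have h6 : (ε/2) ^ γ₂ ≤ x ^ γ₂ := Real.rpow_le_rpow (by positivity) hge (by linarith)
        calc (1:ℝ) = (ε/2) ^ (-γ₂) * (ε/2) ^ γ₂ := by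
              rw [← Real.rpow_add (by positivity)]; norm_num
          _ ≤ (ε/2) ^ (-γ₂) * x ^ γ₂ := mul_le_mul_of_nonneg_left h6 (by positivity)
      have h7 := hφ1 x
      nlinarith [mul_pos (mul_pos ha₂ hxp) (show (0:ℝ) < 2 by norm_num)]
  set G : ℝ → ℝ := fun b => ∫ r in Ioi (0:ℝ), φ (b*r) * f r with hG_def
  have hmeas : ∀ b : ℝ, AEStronglyMeasurable (fun r => φ (b*r) * f r)
      (volume.restrict (Ioi (0:ℝ))) := fun b =>
    ((hφcont.comp (continuous_const.mul continuous_id)).measurable.mul hfm).aestronglyMeasurable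
  have hGint : ∀ b : ℝ, IntegrableOn (fun r => φ (b*r) * f r) (Ioi (0:ℝ)) := by
    intro b
    refine Integrable.mono hf_int (hmeas b) (ae_of_all _ (fun r => ?_))
    rw [Real.norm_eq_abs, Real.norm_eq_abs, abs_mul, abs_of_nonneg (hφ0 _),
      abs_of_nonneg (hf0 _)]
    calc φ (b*r) * f r ≤ 1 * f r := mul_le_mul_of_nonneg_right (hφ1 _) (hf0 r)
      _ = f r := one_mul _
  have hGcont : Continuous G := by
    rw [continuous_iff_continuousAt]
    intro b₀
    apply continuousAt_of_dominated (bound := f) (Eventually.of_forall hmeas)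
    · refine Eventually.of_forall (fun b => ae_of_all _ (fun r => ?_))
      rw [Real.norm_eq_abs, abs_mul, abs_of_nonneg (hφ0 _), abs_of_nonneg (hf0 _)]
      calc φ (b*r) * f r ≤ 1 * f r := mul_le_mul_of_nonneg_right (hφ1 _) (hf0 r)
        _ = f r := one_mul _
    · exact hf_int
    · exact ae_of_all _ (fun r =>
        ((hφcont.comp (continuous_id.mul continuous_const)).mul continuous_const).continuousAt)
  -- small b : φ b < G b
  have hb1ex : ∃ b : ℝ, 0 < b ∧ φ b < G b := by
    obtain ⟨C, hC, hCb⟩ := hCex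
    have hM0 : Tendsto (fun b => G b / (a₂ * b ^ γ₂)) (𝓝[>] (0:ℝ))
        (𝓝 (∫ r in Ioi (0:ℝ), r ^ γ₂ * f r)) := by
      have hint : ∀ b : ℝ, G b / (a₂ * b ^ γ₂)
          = ∫ r in Ioi (0:ℝ), (φ (b*r) * f r) / (a₂ * b ^ γ₂) := fun b =>
        (integral_div _ _).symm
      rw [show (fun b => G b / (a₂*b^γ₂))
          = fun b => ∫ r in Ioi (0:ℝ), (φ (b*r) * f r)/(a₂*b^γ₂) from funext hint]
      apply tendsto_integral_filter_of_dominated_convergence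
        (bound := fun r => (C/a₂) * (r ^ γ₂ * f r))
      · exact Eventually.of_forall (fun b =>
          ((((hφcont.comp (continuous_const.mul continuous_id)).measurable.mul
            hfm).div_const _).aestronglyMeasurable))
      · filter_upwards [self_mem_nhdsWithin] with b hb
        refine (ae_restrict_iff' measurableSet_Ioi).mpr (ae_of_all _ (fun r hr => ?_))
        have hb0 : (0:ℝ) < b := hb
        have hr0 : (0:ℝ) < r := hr
        have hD : 0 < a₂ * b ^ γ₂ := by positivity
        rw [Real.norm_eq_abs, abs_div, abs_mul, abs_of_nonneg (hφ0 _), abs_of_nonneg (hf0 _),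
          abs_of_pos hD, div_le_iff₀ hD]
        have h1 : φ (b*r) ≤ C * (b*r) ^ γ₂ := hCb _ (mul_pos hb0 hr0)
        have h2 : (b*r) ^ γ₂ = b ^ γ₂ * r ^ γ₂ := Real.mul_rpow hb0.le hr0.le
        have h3 : (C/a₂) * (r^γ₂ * f r) * (a₂ * b^γ₂) = C * ((b*r)^γ₂) * f r := by
          rw [h2]; field_simp
        rw [h3]
        exact mul_le_mul_of_nonneg_right h1 (hf0 r)
      · exact ((key γ₂ (by linarith) (by linarith)).1.const_mul _)
      · refine (ae_restrict_iff' measurableSet_Ioi).mpr (ae_of_all _ (fun r hr => ?_))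
        have hr0 : (0:ℝ) < r := hr
        have hbr : Tendsto (fun b : ℝ => b * r) (𝓝[>] (0:ℝ)) (𝓝[>] (0:ℝ)) := by
          apply tendsto_nhdsWithin_of_tendsto_nhds_of_eventually_within
          · have h8 : Tendsto (fun b : ℝ => b * r) (𝓝 (0:ℝ)) (𝓝 (0*r)) :=
              (continuous_id.mul continuous_const).tendsto 0
            rw [zero_mul] at h8
            exact h8.mono_left nhdsWithin_le_nhds
          · filter_upwards [self_mem_nhdsWithin] with b hb
            exact mul_pos hb hr0
        have hlim : Tendsto (fun b : ℝ => (φ (b*r) / (a₂ * (b*r) ^ γ₂)) * (r ^ γ₂ * f r))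
            (𝓝[>] (0:ℝ)) (𝓝 (1 * (r ^ γ₂ * f r))) := (hasymp0.comp hbr).mul_const _
        rw [one_mul] at hlim
        refine Filter.Tendsto.congr' ?_ hlim
        filter_upwards [self_mem_nhdsWithin] with b hb
        have hb0 : (0:ℝ) < b := hb
        have h2 : (b*r) ^ γ₂ = b ^ γ₂ * r ^ γ₂ := Real.mul_rpow hb0.le hr0.le
        have hbp : (0:ℝ) < b ^ γ₂ := Real.rpow_pos_of_pos hb0 _
        have hrp : (0:ℝ) < r ^ γ₂ := Real.rpow_pos_of_pos hr0 _
        rw [h2]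
        field_simp
    have hcomp : ∀ᶠ b in 𝓝[>] (0:ℝ), φ b / (a₂ * b ^ γ₂) < G b / (a₂ * b ^ γ₂) :=
      hasymp0.eventually_lt hM0 hM1
    obtain ⟨b, hp, hb0⟩ := (hcomp.and self_mem_nhdsWithin).exists
    refine ⟨b, hb0, ?_⟩
    have hD : (0:ℝ) < a₂ * b ^ γ₂ := by
      have : (0:ℝ) < b := hb0
      positivity
    have h9 := mul_lt_mul_of_pos_right hp hD
    rwa [div_mul_cancel₀ _ hD.ne', div_mul_cancel₀ _ hD.ne'] at h9
  -- bound at infinity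
  have hXex : ∃ X : ℝ, 1 ≤ X ∧ ∀ x : ℝ, X ≤ x → 1 - φ x ≤ 2*a₁*x ^ γ₁ := by
    have h2 : ∀ᶠ x in atTop, (1 - φ x) / (a₁ * x ^ γ₁) < 2 :=
      hasympI.eventually_lt_const one_lt_two
    obtain ⟨X₀, hX₀⟩ := eventually_atTop.mp h2
    refine ⟨max X₀ 1, le_max_right _ _, fun x hx => ?_⟩
    have hx1 : (1:ℝ) ≤ x := le_trans (le_max_right _ _) hx
    have hx0 : (0:ℝ) < x := by linarith
    have hD : (0:ℝ) < a₁ * x ^ γ₁ := by positivity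
    have h3 := hX₀ x (le_trans (le_max_left _ _) hx)
    rw [div_lt_iff₀ hD] at h3
    linarith
  -- choose δ
  set K : ℝ := 2 * (γ₂ - γ₁) / (γ₂ * (γ₂ - 1)) with hK_def
  have hKpos : 0 < K := by positivity
  set δ : ℝ := Real.exp (-K) with hδ_def
  have hδ0 : 0 < δ := Real.exp_pos _
  have hδ1 : δ < 1 := Real.exp_lt_one_iff.mpr (by linarith)
  -- the truncated weighted integral exceeds 1
  have e1δ : EqOn (fun r : ℝ => r ^ γ₁ * f r)
      (fun r : ℝ => c * (γ₂*(γ₂-1)) * r ^ (γ₂ - 2 + γ₁)) (Ioc δ 1) := by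
    intro r hr
    simp only
    rw [hfIoc r ⟨lt_trans hδ0 hr.1, hr.2⟩, Real.rpow_add (lt_trans hδ0 hr.1)]
    ring
  have e2δ : EqOn (fun r : ℝ => r ^ γ₁ * f r)
      (fun r : ℝ => c * (γ₁*(γ₁-1)) * r ^ (γ₁ - 2 + γ₁)) (Ioi 1) := by
    intro r hr
    simp only
    rw [hfIoi r hr, Real.rpow_add (lt_trans one_pos hr)]
    ring
  have iIcc : ∀ q : ℝ, IntegrableOn (fun r : ℝ => r ^ q) (Ioc δ 1) := by
    intro q
    refine (ContinuousOn.integrableOn_Icc ?_).mono_set Ioc_subset_Icc_self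
    intro x hx
    exact (Real.continuousAt_rpow_const x q (Or.inl (by
      have := hx.1; intro h'; rw [h'] at this; linarith))).continuousWithinAt
  have iInv : IntegrableOn (fun r : ℝ => r⁻¹) (Ioc δ 1) := by
    refine (iIcc (-1)).congr_fun (fun r hr => ?_) measurableSet_Ioc
    exact Real.rpow_neg_one r
  have i1δ : IntegrableOn (fun r : ℝ => r ^ γ₁ * f r) (Ioc δ 1) :=
    IntegrableOn.congr_fun ((iIcc _).const_mul _) (fun r hr => (e1δ hr).symm) measurableSet_Ioc
  have i2δ : IntegrableOn (fun r : ℝ => r ^ γ₁ * f r) (Ioi (1:ℝ)) :=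
    IntegrableOn.congr_fun ((aux_Ioi_int (by linarith : γ₁ - 2 + γ₁ < -1)).1.const_mul _)
      (fun r hr => (e2δ hr).symm) measurableSet_Ioi
  have hsplitδ : Ioc δ 1 ∪ Ioi 1 = Ioi δ := Ioc_union_Ioi_eq_Ioi hδ1.le
  have hNint : IntegrableOn (fun r : ℝ => r ^ γ₁ * f r) (Ioi δ) := by
    rw [← hsplitδ]; exact i1δ.union i2δ
  have hNδ : 1 < ∫ r in Ioi δ, r ^ γ₁ * f r := by
    rw [← hsplitδ, setIntegral_union (Ioc_disjoint_Ioi le_rfl) measurableSet_Ioi i1δ i2δ]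
    have hpart2 : 0 ≤ ∫ r in Ioi (1:ℝ), r ^ γ₁ * f r := by
      refine setIntegral_nonneg measurableSet_Ioi (fun r hr => ?_)
      exact mul_nonneg (Real.rpow_nonneg (by linarith [mem_Ioi.mp hr]) _) (hf0 r)
    have hlog : (∫ r in Ioc δ 1, r⁻¹) = K := by
      rw [← intervalIntegral.integral_of_le hδ1.le,
        integral_inv (notMem_uIcc_of_lt hδ0 one_pos),
        show (1:ℝ)/δ = Real.exp K by rw [hδ_def, Real.exp_neg]; field_simp,
        Real.log_exp]
    have hmono : (∫ r in Ioc δ 1, r⁻¹) ≤ ∫ r in Ioc δ 1, r ^ (γ₂ - 2 + γ₁) := by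
      refine setIntegral_mono_on iInv (iIcc _) measurableSet_Ioc (fun r hr => ?_)
      rw [← Real.rpow_neg_one r]
      exact Real.rpow_le_rpow_of_exponent_ge (lt_trans hδ0 hr.1) hr.2 (by linarith)
    have hpart1 : 2 ≤ ∫ r in Ioc δ 1, r ^ γ₁ * f r := by
      rw [setIntegral_congr_fun measurableSet_Ioc e1δ, integral_const_mul]
      have h4 : c * (γ₂ * (γ₂-1)) * K = 2 := by
        rw [hc_def, hK_def]
        field_simp
        exact div_self (show γ₂ - 1 ≠ 0 by linarith)
      calc (2:ℝ) = c * (γ₂ * (γ₂-1)) * K := h4.symm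
        _ ≤ c * (γ₂ * (γ₂-1)) * ∫ r in Ioc δ 1, r ^ (γ₂ - 2 + γ₁) := by
            apply mul_le_mul_of_nonneg_left _ (by positivity)
            rw [← hlog]; exact hmono
    linarith
  -- large b : G b < φ b eventually
  have hb2ev : ∀ᶠ b in atTop, G b < φ b := by
    obtain ⟨X, hX1, hXb⟩ := hXex
    have hMI : Tendsto (fun b => ∫ r in Ioi δ, ((1 - φ (b*r)) * f r) / (a₁ * b ^ γ₁)) atTop
        (𝓝 (∫ r in Ioi δ, r ^ γ₁ * f r)) := by
      apply tendsto_integral_filter_of_dominated_convergence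
        (bound := fun r => 2 * (r ^ γ₁ * f r))
      · refine Eventually.of_forall (fun b => ?_)
        exact (((continuous_const.sub (hφcont.comp
          (continuous_const.mul continuous_id))).measurable.mul hfm).div_const _).aestronglyMeasurable
      · filter_upwards [eventually_ge_atTop (max (X/δ) 1)] with b hb
        refine (ae_restrict_iff' measurableSet_Ioi).mpr (ae_of_all _ (fun r hr => ?_))
        have hb1 : (1:ℝ) ≤ b := le_trans (le_max_right _ _) hb
        have hb0 : (0:ℝ) < b := by linarith
        have hrδ : δ < r := hr
        have hr0 : (0:ℝ) < r := lt_trans hδ0 hrδ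
        have hbrX : X ≤ b * r := by
          have h5 : X / δ ≤ b := le_trans (le_max_left _ _) hb
          have h6 : X ≤ b * δ := (div_le_iff₀ hδ0).mp h5
          nlinarith
        have hφle : 1 - φ (b*r) ≤ 2*a₁*(b*r) ^ γ₁ := hXb _ hbrX
        have hD : (0:ℝ) < a₁ * b ^ γ₁ := by positivity
        have hnum : (0:ℝ) ≤ (1 - φ (b*r)) * f r :=
          mul_nonneg (by linarith [hφ1 (b*r)]) (hf0 r)
        rw [Real.norm_eq_abs, abs_div, abs_of_nonneg hnum, abs_of_pos hD, div_le_iff₀ hD]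
        have h2 : (b*r) ^ γ₁ = b ^ γ₁ * r ^ γ₁ := Real.mul_rpow hb0.le hr0.le
        have h3 : 2 * (r^γ₁ * f r) * (a₁ * b^γ₁) = 2*a₁*(b*r)^γ₁ * f r := by
          rw [h2]; ring
        rw [h3]
        exact mul_le_mul_of_nonneg_right hφle (hf0 r)
      · exact hNint.const_mul _
      · refine (ae_restrict_iff' measurableSet_Ioi).mpr (ae_of_all _ (fun r hr => ?_))
        have hr0 : (0:ℝ) < r := lt_trans hδ0 hr
        have hbr : Tendsto (fun b : ℝ => b * r) atTop atTop :=
          Tendsto.atTop_mul_const hr0 tendsto_id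
        have hlim : Tendsto (fun b : ℝ => ((1 - φ (b*r)) / (a₁ * (b*r) ^ γ₁)) * (r ^ γ₁ * f r))
            atTop (𝓝 (1 * (r ^ γ₁ * f r))) := (hasympI.comp hbr).mul_const _
        rw [one_mul] at hlim
        refine Filter.Tendsto.congr' ?_ hlim
        filter_upwards [eventually_gt_atTop 0] with b hb0
        have h2 : (b*r) ^ γ₁ = b ^ γ₁ * r ^ γ₁ := Real.mul_rpow hb0.le hr0.le
        have hbp : (0:ℝ) < b ^ γ₁ := Real.rpow_pos_of_pos hb0 _
        have hrp : (0:ℝ) < r ^ γ₁ := Real.rpow_pos_of_pos hr0 _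
        rw [h2]
        field_simp
    have hev : ∀ᶠ b in atTop, (1 - φ b) / (a₁ * b ^ γ₁)
        < ∫ r in Ioi δ, ((1 - φ (b*r)) * f r) / (a₁ * b ^ γ₁) :=
      hasympI.eventually_lt hMI hNδ
    filter_upwards [hev, eventually_gt_atTop 0] with b hblt hb0
    have hD : (0:ℝ) < a₁ * b ^ γ₁ := by positivity
    rw [integral_div] at hblt
    have hblt2 : 1 - φ b < ∫ r in Ioi δ, (1 - φ (b*r)) * f r := by
      have h9 := mul_lt_mul_of_pos_right hblt hD
      rwa [div_mul_cancel₀ _ hD.ne', div_mul_cancel₀ _ hD.ne'] at h9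
    have hΨint : IntegrableOn (fun r => (1 - φ (b*r)) * f r) (Ioi (0:ℝ)) := by
      have h10 : (fun r : ℝ => (1 - φ (b*r)) * f r) = fun r => f r - φ (b*r) * f r := by
        funext r; ring
      rw [h10]; exact hf_int.sub (hGint b)
    have hΨ0 : 0 ≤ᵐ[volume.restrict (Ioi (0:ℝ))] fun r => (1 - φ (b*r)) * f r :=
      ae_of_all _ (fun r => mul_nonneg (by linarith [hφ1 (b*r)]) (hf0 r))
    have hmono2 : (∫ r in Ioi δ, (1 - φ (b*r)) * f r)
        ≤ ∫ r in Ioi (0:ℝ), (1 - φ (b*r)) * f r :=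
      setIntegral_mono_set hΨint hΨ0 (HasSubset.Subset.eventuallyLE (Ioi_subset_Ioi hδ0.le))
    have hval : (∫ r in Ioi (0:ℝ), (1 - φ (b*r)) * f r) = 1 - G b := by
      rw [show (fun r : ℝ => (1 - φ (b*r)) * f r) = fun r => f r - φ (b*r) * f r from by
          funext r; ring,
        integral_sub hf_int (hGint b), hf_mass]
    linarith [hblt2, hmono2, hval]
  -- IVT
  obtain ⟨b₁, hb₁0, hb₁⟩ := hb1ex
  obtain ⟨b₂, hb₂lt, hb₂ge⟩ := (hb2ev.and (eventually_ge_atTop (b₁+1))).exists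
  have h12 : b₁ ≤ b₂ := by linarith
  have hcont : ContinuousOn (fun b => G b - φ b) (Icc b₁ b₂) :=
    (hGcont.sub hφcont).continuousOn
  obtain ⟨b, hbmem, hbeq⟩ := intermediate_value_Icc' h12 hcont
    (⟨by linarith, by linarith⟩ : (0:ℝ) ∈ Icc (G b₂ - φ b₂) (G b₁ - φ b₁))
  exact ⟨b, lt_of_lt_of_le hb₁0 hbmem.1, sub_eq_zero.mp hbeq⟩
end

section
/- Let φ : ℝ₊ → [0,1] be bounded and Lipschitz on compacts with β[φ] differentiable, where β[φ](b) = (γ₂(γ₂−1)/(γ₂−γ₁)) b^{1−γ₂} ∫₀^b r^{γ₂−2} φ(r) dr + (γ₁(γ₁−1)/(γ₂−γ₁)) b^{1−γ₁} ∫_b^∞ r^{γ₁−2} φ(r) dr. If β[φ](b) = φ(b) at some b > 0, then β[φ]'(b) = −γ₁ b^{−γ₁} ∫_b^∞ φ'(r) r^{γ₁−1} dr and also β[φ]'(b) = γ₂ b^{−γ₂} ∫₀^b φ'(r) r^{γ₂−1} dr. -/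
open MeasureTheory Set Filter Topology

lemma alg_aux (g1 g2 b X Y U V P d : ℝ) (hb : b ≠ 0) (hX : X ≠ 0) (hY : Y ≠ 0)
    (hg : g2 - g1 ≠ 0)
    (hdD : d = (g2 * (g2 - 1) / (g2 - g1)) * ((1 - g2) * (Y * b⁻¹)) * V
        + (g2 * (g2 - 1) / (g2 - g1)) * Y * (Y⁻¹ * b⁻¹ * P)
        + ((g1 * (g1 - 1) / (g2 - g1)) * ((1 - g1) * (X * b⁻¹)) * U
        + (g1 * (g1 - 1) / (g2 - g1)) * X * (-(X⁻¹ * b⁻¹ * P))))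
    (hPhi : P = (g2 * (g2 - 1) / (g2 - g1)) * Y * V + (g1 * (g1 - 1) / (g2 - g1)) * X * U) :
    d = -g1 * (X * b⁻¹) * (-P * X⁻¹ - (g1 - 1) * U)
      ∧ d = g2 * (Y * b⁻¹) * (P * Y⁻¹ - (g2 - 1) * V) := by
  subst hdD
  constructor
  · rw [hPhi]; field_simp; ring
  · rw [hPhi]; field_simp; ring

/-- Derivative identities for `β[φ]` at a fixed point: if
`β[φ](b) = (γ₂(γ₂−1)/(γ₂−γ₁)) b^{1−γ₂} ∫₀^b r^{γ₂−2} φ(r) dr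
         + (γ₁(γ₁−1)/(γ₂−γ₁)) b^{1−γ₁} ∫_b^∞ r^{γ₁−2} φ(r) dr`
and `β[φ](b) = φ(b)` at some `b > 0`, then
`β[φ]'(b) = −γ₁ b^{−γ₁} ∫_b^∞ φ'(r) r^{γ₁−1} dr = γ₂ b^{−γ₂} ∫₀^b φ'(r) r^{γ₂−1} dr`. -/
theorem stmt_14 (γ₁ γ₂ : ℝ) (hγ₁ : γ₁ < 0) (hγ₂ : 1 < γ₂)
    (φ φ' : ℝ → ℝ) (hφ01 : ∀ x, φ x ∈ Icc (0 : ℝ) 1) (hφ0 : φ 0 = 0)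
    (hlip : ∀ R > (0 : ℝ), ∃ L : NNReal, LipschitzOnWith L φ (Icc 0 R))
    (hderiv : ∀ᵐ x ∂(volume.restrict (Ioi (0 : ℝ))), HasDerivAt φ (φ' x) x)
    (hftc : ∀ a c : ℝ, 0 ≤ a → a ≤ c → φ c - φ a = ∫ x in a..c, φ' x)
    (hint₁ : ∀ c > (0 : ℝ), IntegrableOn (fun r => φ' r * r ^ (γ₁ - 1)) (Ioi c))
    (hint₂ : ∀ c > (0 : ℝ), IntegrableOn (fun r => φ' r * r ^ (γ₂ - 1)) (Ioc 0 c))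
    (β : ℝ → ℝ)
    (hβ : ∀ c > (0 : ℝ), β c =
      (γ₂ * (γ₂ - 1) / (γ₂ - γ₁)) * c ^ (1 - γ₂) * (∫ r in Ioc (0 : ℝ) c, r ^ (γ₂ - 2) * φ r)
      + (γ₁ * (γ₁ - 1) / (γ₂ - γ₁)) * c ^ (1 - γ₁) * (∫ r in Ioi c, r ^ (γ₁ - 2) * φ r))
    (b d : ℝ) (hb : 0 < b) (hd : HasDerivAt β d b)
    (hfix : β b = φ b) :
    d = -γ₁ * b ^ (-γ₁) * (∫ r in Ioi b, φ' r * r ^ (γ₁ - 1))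
      ∧ d = γ₂ * b ^ (-γ₂) * (∫ r in Ioc (0 : ℝ) b, φ' r * r ^ (γ₂ - 1)) := by
  have hbne : b ≠ 0 := hb.ne'
  have hγd : γ₂ - γ₁ ≠ 0 := by linarith
  set A : ℝ := γ₂ * (γ₂ - 1) / (γ₂ - γ₁) with hA
  set B : ℝ := γ₁ * (γ₁ - 1) / (γ₂ - γ₁) with hB
  set ψ : ℝ → ℝ := deriv φ with hψdef
  have hψm : Measurable ψ := measurable_deriv φ
  have hae : ∀ᵐ x ∂(volume.restrict (Ioi (0 : ℝ))), φ' x = ψ x := by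
    filter_upwards [hderiv] with x hx using (hx.deriv).symm
  have hψd : ∀ᵐ x ∂(volume.restrict (Ioi (0 : ℝ))), HasDerivAt φ (ψ x) x := by
    filter_upwards [hderiv, hae] with x hx h2; rwa [h2] at hx
  -- continuity of φ
  have hφca : ∀ x : ℝ, 0 < x → ContinuousAt φ x := by
    intro x hx
    obtain ⟨L, hL⟩ := hlip (x + 1) (by linarith)
    exact hL.continuousOn.continuousAt (Icc_mem_nhds (by linarith) (by linarith))
  have hφcIci : ContinuousOn φ (Ici 0) := by
    intro x hx
    obtain ⟨L, hL⟩ := hlip (x + 1) (by have h0 : (0:ℝ) ≤ x := hx; linarith)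
    refine (hL.continuousOn x ⟨hx, by linarith⟩).mono_of_mem_nhdsWithin ?_
    refine mem_nhdsWithin.2 ⟨Iio (x + 1), isOpen_Iio, by simp, ?_⟩
    rintro y ⟨hy1, hy2⟩; exact ⟨hy2, le_of_lt hy1⟩
  have hφnn : ∀ x, 0 ≤ φ x := fun x => (hφ01 x).1
  have hφle : ∀ x, φ x ≤ 1 := fun x => (hφ01 x).2
  -- integrands
  set f₁ : ℝ → ℝ := fun r => r ^ (γ₁ - 2) * φ r with hf₁def
  set f₂ : ℝ → ℝ := fun r => r ^ (γ₂ - 2) * φ r with hf₂def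
  set F₁ : ℝ → ℝ := fun c => ∫ r in Ioi c, f₁ r with hF₁def
  set F₂ : ℝ → ℝ := fun c => ∫ r in Ioc (0 : ℝ) c, f₂ r with hF₂def
  have hcont₁ : ContinuousOn f₁ (Ioi (0:ℝ)) := by
    intro x hx
    exact ((Real.continuousAt_rpow_const x _ (Or.inl (ne_of_gt hx))).continuousWithinAt.mul
      ((hφca x hx).continuousWithinAt))
  have hcont₂ : ContinuousOn f₂ (Ioi (0:ℝ)) := by
    intro x hx
    exact ((Real.continuousAt_rpow_const x _ (Or.inl (ne_of_gt hx))).continuousWithinAt.mul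
      ((hφca x hx).continuousWithinAt))
  -- integrability of f₂ on Ioc 0 R
  have hf₂int : ∀ R : ℝ, IntegrableOn f₂ (Ioc 0 R) := by
    intro R
    rcases le_or_gt R 0 with h | h
    · rw [Set.Ioc_eq_empty (by intro hc; exact absurd (hc.trans_le h) (lt_irrefl 0))]
      exact integrableOn_empty
    · refine Integrable.mono' (g := fun r => r ^ (γ₂ - 2))
        ((intervalIntegral.intervalIntegrable_rpow' (by linarith)).1) ?_ ?_
      · exact (hcont₂.mono (fun x hx => hx.1)).aestronglyMeasurable measurableSet_Ioc
      · refine (ae_restrict_iff' measurableSet_Ioc).2 (ae_of_all _ fun r hr => ?_)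
        have h1 : (0:ℝ) ≤ r ^ (γ₂ - 2) := Real.rpow_nonneg hr.1.le _
        rw [hf₂def]
        simp only [Real.norm_eq_abs, abs_mul, abs_of_nonneg h1, abs_of_nonneg (hφnn r)]
        nlinarith [hφle r, hφnn r]
  -- integrability of f₁ on Ioi c
  have hf₁int : ∀ c : ℝ, 0 < c → IntegrableOn f₁ (Ioi c) := by
    intro c hc
    refine Integrable.mono' (g := fun r => r ^ (γ₁ - 2))
      (integrableOn_Ioi_rpow_of_lt (by linarith) hc) ?_ ?_
    · exact (hcont₁.mono (fun x hx => hc.trans hx)).aestronglyMeasurable measurableSet_Ioi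
    · refine (ae_restrict_iff' measurableSet_Ioi).2 (ae_of_all _ fun r hr => ?_)
      have h1 : (0:ℝ) ≤ r ^ (γ₁ - 2) := Real.rpow_nonneg (hc.le.trans (le_of_lt hr)) _
      rw [hf₁def]
      simp only [Real.norm_eq_abs, abs_mul, abs_of_nonneg h1, abs_of_nonneg (hφnn r)]
      nlinarith [hφle r, hφnn r]
  -- derivative of F₂ at b
  have hII₂ : ∀ u v : ℝ, 0 ≤ u → 0 ≤ v → IntervalIntegrable f₂ volume u v := by
    intro u v hu hv
    exact ⟨(hf₂int v).mono_set (Ioc_subset_Ioc hu le_rfl),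
      (hf₂int u).mono_set (Ioc_subset_Ioc hv le_rfl)⟩
  have hF₂split : ∀ c : ℝ, 0 < c → F₂ c = F₂ b + ∫ x in b..c, f₂ x := by
    intro c hc
    have h1 : F₂ c = ∫ x in (0:ℝ)..c, f₂ x := (intervalIntegral.integral_of_le hc.le).symm
    have h2 : F₂ b = ∫ x in (0:ℝ)..b, f₂ x := (intervalIntegral.integral_of_le hb.le).symm
    rw [h1, h2, intervalIntegral.integral_add_adjacent_intervals (hII₂ 0 b le_rfl hb.le)
      (hII₂ b c hb.le hc.le)]
  have hsm₂ : StronglyMeasurableAtFilter f₂ (𝓝 b) :=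
    ⟨Ioi 0, Ioi_mem_nhds hb, hcont₂.aestronglyMeasurable measurableSet_Ioi⟩
  have hca₂ : ContinuousAt f₂ b :=
    (Real.continuousAt_rpow_const b _ (Or.inl hbne)).mul (hφca b hb)
  have hF₂d : HasDerivAt F₂ (f₂ b) b := by
    refine HasDerivAt.congr_of_eventuallyEq
      ((intervalIntegral.integral_hasDerivAt_right (IntervalIntegrable.refl)
        hsm₂ hca₂).const_add (F₂ b)) ?_
    filter_upwards [eventually_gt_nhds hb] with c hc using hF₂split c hc
  -- derivative of F₁ at b
  have hF₁split : ∀ u v : ℝ, 0 < u → u ≤ v → F₁ u = (∫ x in u..v, f₁ x) + F₁ v := by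
    intro u v hu huv
    rw [hF₁def]
    simp only
    rw [← Set.Ioc_union_Ioi_eq_Ioi huv,
      setIntegral_union (Set.Ioc_disjoint_Ioi le_rfl) measurableSet_Ioi
        ((hf₁int u hu).mono_set Set.Ioc_subset_Ioi_self) (hf₁int v (hu.trans_le huv)),
      intervalIntegral.integral_of_le huv]
  have hF₁split' : ∀ c : ℝ, 0 < c → F₁ c = F₁ b + ∫ x in b..c, -f₁ x := by
    intro c hc
    rw [intervalIntegral.integral_neg]
    rcases le_total b c with h | h
    · have := hF₁split b c hb h; linarith
    · have := hF₁split c b hc h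
      rw [intervalIntegral.integral_symm]
      linarith
  have hsm₁ : StronglyMeasurableAtFilter (fun x => -f₁ x) (𝓝 b) :=
    ⟨Ioi 0, Ioi_mem_nhds hb, (hcont₁.neg).aestronglyMeasurable measurableSet_Ioi⟩
  have hca₁ : ContinuousAt (fun x => -f₁ x) b :=
    ((Real.continuousAt_rpow_const b _ (Or.inl hbne)).mul (hφca b hb)).neg
  have hF₁d : HasDerivAt F₁ (-f₁ b) b := by
    refine HasDerivAt.congr_of_eventuallyEq
      ((intervalIntegral.integral_hasDerivAt_right (IntervalIntegrable.refl)
        hsm₁ hca₁).const_add (F₁ b)) ?_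
    filter_upwards [eventually_gt_nhds hb] with c hc using hF₁split' c hc
  -- derivative of β at b
  have hr₂ : HasDerivAt (fun c : ℝ => c ^ (1 - γ₂)) ((1 - γ₂) * b ^ (1 - γ₂ - 1)) b :=
    Real.hasDerivAt_rpow_const (Or.inl hbne)
  have hr₁ : HasDerivAt (fun c : ℝ => c ^ (1 - γ₁)) ((1 - γ₁) * b ^ (1 - γ₁ - 1)) b :=
    Real.hasDerivAt_rpow_const (Or.inl hbne)
  have hf1b : f₁ b = b ^ (γ₁ - 2) * φ b := rfl
  have hf2b : f₂ b = b ^ (γ₂ - 2) * φ b := rfl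
  have hform : HasDerivAt (fun c => A * c ^ (1 - γ₂) * F₂ c + B * c ^ (1 - γ₁) * F₁ c)
      ((A * ((1 - γ₂) * b ^ (1 - γ₂ - 1)) * F₂ b + A * b ^ (1 - γ₂) * f₂ b)
        + (B * ((1 - γ₁) * b ^ (1 - γ₁ - 1)) * F₁ b + B * b ^ (1 - γ₁) * (-f₁ b))) b :=
    ((hr₂.const_mul A).mul hF₂d).add ((hr₁.const_mul B).mul hF₁d)
  have hβd : HasDerivAt β ((A * ((1 - γ₂) * b ^ (1 - γ₂ - 1)) * F₂ b + A * b ^ (1 - γ₂) * f₂ b)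
      + (B * ((1 - γ₁) * b ^ (1 - γ₁ - 1)) * F₁ b + B * b ^ (1 - γ₁) * (-f₁ b))) b := by
    refine hform.congr_of_eventuallyEq ?_
    filter_upwards [eventually_gt_nhds hb] with c hc using (hβ c hc)
  have hdD : d = (A * ((1 - γ₂) * b ^ (1 - γ₂ - 1)) * F₂ b + A * b ^ (1 - γ₂) * f₂ b)
      + (B * ((1 - γ₁) * b ^ (1 - γ₁ - 1)) * F₁ b + B * b ^ (1 - γ₁) * (-f₁ b)) := hd.unique hβd
  rw [hf1b, hf2b] at hdD
  -- rpow algebra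
  have hx0 : (0:ℝ) < b ^ (1 - γ₁) := Real.rpow_pos_of_pos hb _
  have hy0 : (0:ℝ) < b ^ (1 - γ₂) := Real.rpow_pos_of_pos hb _
  have e1 : b ^ (1 - γ₂ - 1) = b ^ (1 - γ₂) * b⁻¹ := by
    rw [show (1 - γ₂ - 1) = (1 - γ₂) + (-1) by ring, Real.rpow_add hb, Real.rpow_neg_one]
  have e2 : b ^ (1 - γ₁ - 1) = b ^ (1 - γ₁) * b⁻¹ := by
    rw [show (1 - γ₁ - 1) = (1 - γ₁) + (-1) by ring, Real.rpow_add hb, Real.rpow_neg_one]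
  have e3 : b ^ (-γ₂) = b ^ (1 - γ₂) * b⁻¹ := by
    rw [show (-γ₂) = (1 - γ₂) + (-1) by ring, Real.rpow_add hb, Real.rpow_neg_one]
  have e4 : b ^ (-γ₁) = b ^ (1 - γ₁) * b⁻¹ := by
    rw [show (-γ₁) = (1 - γ₁) + (-1) by ring, Real.rpow_add hb, Real.rpow_neg_one]
  have e5 : b ^ (γ₂ - 2) = (b ^ (1 - γ₂))⁻¹ * b⁻¹ := by
    rw [show (γ₂ - 2) = (-(1 - γ₂)) + (-1) by ring, Real.rpow_add hb, Real.rpow_neg_one,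
      Real.rpow_neg hb.le]
  have e6 : b ^ (γ₁ - 2) = (b ^ (1 - γ₁))⁻¹ * b⁻¹ := by
    rw [show (γ₁ - 2) = (-(1 - γ₁)) + (-1) by ring, Real.rpow_add hb, Real.rpow_neg_one,
      Real.rpow_neg hb.le]
  have e7 : b ^ (γ₂ - 1) = (b ^ (1 - γ₂))⁻¹ := by
    rw [show (γ₂ - 1) = -(1 - γ₂) by ring, Real.rpow_neg hb.le]
  have e8 : b ^ (γ₁ - 1) = (b ^ (1 - γ₁))⁻¹ := by
    rw [show (γ₁ - 1) = -(1 - γ₁) by ring, Real.rpow_neg hb.le]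
  rw [e1, e2, e5, e6] at hdD
  -- fixed point relation
  have hPhi : φ b = A * b ^ (1 - γ₂) * F₂ b + B * b ^ (1 - γ₁) * F₁ b := by
    rw [← hfix, hβ b hb]
  -- integration by parts identities
  have hψftc : ∀ u v : ℝ, 0 ≤ u → u ≤ v → φ v - φ u = ∫ s in Ioc u v, ψ s := by
    intro u v hu huv
    rw [hftc u v hu huv, intervalIntegral.integral_of_le huv]
    refine integral_congr_ae ?_
    filter_upwards [ae_restrict_of_ae_restrict_of_subset
      (fun x (hx : x ∈ Ioc u v) => hu.trans_lt hx.1) hae] with r hr using hr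
  have hJ₁ : (∫ r in Ioi b, φ' r * r ^ (γ₁ - 1)) = -(φ b) * b ^ (γ₁ - 1) - (γ₁ - 1) * F₁ b := by
    have hg1ne : γ₁ - 1 ≠ 0 := by linarith
    have haeb : ∀ᵐ x ∂(volume.restrict (Ioi b)), φ' x = ψ x :=
      ae_restrict_of_ae_restrict_of_subset (fun x hx => hb.trans hx) hae
    have hstep0 : (∫ r in Ioi b, φ' r * r ^ (γ₁ - 1)) = ∫ r in Ioi b, ψ r * r ^ (γ₁ - 1) := by
      refine integral_congr_ae ?_
      filter_upwards [haeb] with r hr; rw [hr]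
    have hψ1b : IntegrableOn (fun r => ψ r * r ^ (γ₁ - 1)) (Ioi b) := by
      refine (hint₁ b hb).congr ?_
      filter_upwards [haeb] with r hr; rw [hr]
    set μ : Measure ℝ := volume.restrict (Ioi b) with hμ
    set g : ℝ × ℝ → ℝ := fun p => if p.1 < p.2 then ψ p.1 * p.2 ^ (γ₁ - 2) else 0 with hgdef
    have hgm : AEStronglyMeasurable g (μ.prod μ) :=
      (Measurable.ite (measurableSet_lt measurable_fst measurable_snd)
        ((hψm.comp measurable_fst).mul (measurable_snd.pow_const _))
        measurable_const).aestronglyMeasurable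
    have hsec : ∀ s : ℝ, (fun t => g (s, t)) =
        Set.indicator (Ioi s) (fun t => ψ s * t ^ (γ₁ - 2)) := by
      intro s; funext t
      simp [hgdef, Set.indicator_apply, mem_Ioi]
    have hrint : IntegrableOn (fun t : ℝ => t ^ (γ₁ - 2)) (Ioi b) :=
      integrableOn_Ioi_rpow_of_lt (by linarith) hb
    have hinner : ∀ s ∈ Ioi b, (∫ t, g (s, t) ∂μ) = ψ s * (-(s ^ (γ₁ - 1)) / (γ₁ - 1)) := by
      intro s hs
      rw [hsec s, integral_indicator measurableSet_Ioi, hμ,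
        Measure.restrict_restrict measurableSet_Ioi, Set.Ioi_inter_Ioi,
        max_eq_left (le_of_lt hs), integral_const_mul,
        integral_Ioi_rpow_of_lt (by linarith) (hb.trans hs),
        show γ₁ - 2 + 1 = γ₁ - 1 by ring]
    have hninner : ∀ s ∈ Ioi b, (∫ t, ‖g (s, t)‖ ∂μ) = ‖ψ s * s ^ (γ₁ - 1)‖ * (-(γ₁ - 1))⁻¹ := by
      intro s hs
      have hs0 : (0:ℝ) < s := hb.trans hs
      have h1 : (fun t => ‖g (s, t)‖) =
          Set.indicator (Ioi s) (fun t => ‖ψ s‖ * t ^ (γ₁ - 2)) := by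
        funext t
        rcases lt_or_ge s t with h | h
        · have ht0 : (0:ℝ) ≤ t := (hs0.trans h).le
          simp [hgdef, h, Set.indicator_of_mem (mem_Ioi.2 h), norm_mul,
            Real.norm_eq_abs, abs_of_nonneg (Real.rpow_nonneg ht0 _)]
        · simp [hgdef, not_lt.2 h, Set.indicator_of_notMem (fun hc => absurd (mem_Ioi.1 hc) (not_lt.2 h))]
      rw [h1, integral_indicator measurableSet_Ioi, hμ,
        Measure.restrict_restrict measurableSet_Ioi, Set.Ioi_inter_Ioi,
        max_eq_left (le_of_lt hs), integral_const_mul,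
        integral_Ioi_rpow_of_lt (by linarith) hs0,
        show γ₁ - 2 + 1 = γ₁ - 1 by ring]
      rw [norm_mul, Real.norm_eq_abs (s ^ (γ₁ - 1)), abs_of_nonneg (Real.rpow_nonneg hs0.le _)]
      field_simp
    have hgint : Integrable g (μ.prod μ) := by
      refine (integrable_prod_iff hgm).2 ⟨?_, ?_⟩
      · refine (ae_restrict_mem measurableSet_Ioi).mono fun s _ => ?_
        rw [hsec s]
        exact (hrint.const_mul _).indicator measurableSet_Ioi
      · refine Integrable.congr ((hψ1b.norm).mul_const ((-(γ₁ - 1))⁻¹)) ?_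
        refine (ae_restrict_mem measurableSet_Ioi).mono fun s hs => ?_
        exact (hninner s hs).symm
    have hswap : (∫ s, (∫ t, g (s, t) ∂μ) ∂μ) = ∫ t, (∫ s, g (s, t) ∂μ) ∂μ :=
      integral_integral_swap hgint
    have hLHS : (∫ s, (∫ t, g (s, t) ∂μ) ∂μ)
        = (∫ r in Ioi b, ψ r * r ^ (γ₁ - 1)) * (-(γ₁ - 1))⁻¹ := by
      rw [← integral_mul_const]
      refine integral_congr_ae ?_
      filter_upwards [ae_restrict_mem measurableSet_Ioi] with s hs
      rw [hinner s hs]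
      field_simp
    have hrinner : ∀ t ∈ Ioi b, (∫ s, g (s, t) ∂μ) = t ^ (γ₁ - 2) * (φ t - φ b) := by
      intro t ht
      have h1 : (fun s => g (s, t)) =
          Set.indicator (Iio t) (fun s => ψ s * t ^ (γ₁ - 2)) := by
        funext s
        simp [hgdef, Set.indicator_apply, mem_Iio]
      rw [h1, integral_indicator measurableSet_Iio, hμ,
        Measure.restrict_restrict measurableSet_Iio, Set.Iio_inter_Ioi,
        integral_mul_const, ← integral_Ioc_eq_integral_Ioo, ← hψftc b t hb.le (le_of_lt ht)]
      ring
    have hRHS : (∫ t, (∫ s, g (s, t) ∂μ) ∂μ)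
        = F₁ b - φ b * (-(b ^ (γ₁ - 1)) / (γ₁ - 1)) := by
      have h1 : (∫ t, (∫ s, g (s, t) ∂μ) ∂μ)
          = ∫ t in Ioi b, (t ^ (γ₁ - 2) * φ t - φ b * t ^ (γ₁ - 2)) := by
        refine integral_congr_ae ?_
        filter_upwards [ae_restrict_mem measurableSet_Ioi] with t ht
        rw [hrinner t ht]; ring
      rw [h1, integral_sub (hf₁int b hb) (hrint.const_mul _), integral_const_mul,
        integral_Ioi_rpow_of_lt (by linarith) hb,
        show γ₁ - 2 + 1 = γ₁ - 1 by ring]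
    rw [hstep0]
    have hfin : (∫ r in Ioi b, ψ r * r ^ (γ₁ - 1)) * (-(γ₁ - 1))⁻¹
        = F₁ b - φ b * (-(b ^ (γ₁ - 1)) / (γ₁ - 1)) := by
      rw [← hLHS, hswap, hRHS]
    have hJ : (∫ r in Ioi b, ψ r * r ^ (γ₁ - 1))
        = (F₁ b - φ b * (-(b ^ (γ₁ - 1)) / (γ₁ - 1))) * (-(γ₁ - 1)) := by
      rw [← hfin]
      field_simp
    rw [hJ]
    field_simp
    ring
  have hJ₂ : (∫ r in Ioc (0:ℝ) b, φ' r * r ^ (γ₂ - 1))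
      = φ b * b ^ (γ₂ - 1) - (γ₂ - 1) * F₂ b := by
    have hg2ne : γ₂ - 1 ≠ 0 := by linarith
    have haeb : ∀ᵐ x ∂(volume.restrict (Ioc (0:ℝ) b)), φ' x = ψ x :=
      ae_restrict_of_ae_restrict_of_subset (fun x (hx : x ∈ Ioc (0:ℝ) b) => hx.1) hae
    have hstep0 : (∫ r in Ioc (0:ℝ) b, φ' r * r ^ (γ₂ - 1))
        = ∫ r in Ioc (0:ℝ) b, ψ r * r ^ (γ₂ - 1) := by
      refine integral_congr_ae ?_
      filter_upwards [haeb] with r hr; rw [hr]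
    have hψ2b : IntegrableOn (fun r => ψ r * r ^ (γ₂ - 1)) (Ioc (0:ℝ) b) := by
      refine (hint₂ b hb).congr ?_
      filter_upwards [haeb] with r hr; rw [hr]
    -- a.e. bound on ψ from the Lipschitz property
    obtain ⟨L, hL⟩ := hlip (b + 1) (by linarith)
    have hbound : ∀ᵐ s ∂(volume.restrict (Ioc (0:ℝ) b)), ‖ψ s‖ ≤ (L : ℝ) := by
      filter_upwards [ae_restrict_of_ae_restrict_of_subset
        (fun x (hx : x ∈ Ioc (0:ℝ) b) => hx.1) hψd,
        ae_restrict_mem measurableSet_Ioc] with s hs hmem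
      have h1 : Icc (0:ℝ) (b + 1) ∈ 𝓝 s :=
        Icc_mem_nhds (by linarith [hmem.1]) (by linarith [hmem.2])
      have h2 := hs.hasFDerivAt.le_of_lipschitzOn h1 hL
      simpa [ContinuousLinearMap.norm_smulRight_apply] using h2
    have hψint : IntegrableOn ψ (Ioc (0:ℝ) b) := by
      refine Integrable.mono' (g := fun _ => (L : ℝ))
        (integrableOn_const measure_Ioc_lt_top.ne)
        (hψm.aestronglyMeasurable.restrict) hbound
    set μ : Measure ℝ := volume.restrict (Ioc (0:ℝ) b) with hμ
    set g : ℝ × ℝ → ℝ := fun p => if p.1 < p.2 then ψ p.1 * p.2 ^ (γ₂ - 2) else 0 with hgdef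
    have hgm : AEStronglyMeasurable g (μ.prod μ) :=
      (Measurable.ite (measurableSet_lt measurable_fst measurable_snd)
        ((hψm.comp measurable_fst).mul (measurable_snd.pow_const _))
        measurable_const).aestronglyMeasurable
    have hrint2 : IntegrableOn (fun t : ℝ => t ^ (γ₂ - 2)) (Ioc (0:ℝ) b) :=
      (intervalIntegral.intervalIntegrable_rpow' (by linarith)).1
    have hsec : ∀ s : ℝ, (fun t => g (s, t)) =
        Set.indicator (Ioi s) (fun t => ψ s * t ^ (γ₂ - 2)) := by
      intro s; funext t
      simp [hgdef, Set.indicator_apply, mem_Ioi]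
    have hIoc : ∀ s ∈ Ioc (0:ℝ) b, Ioi s ∩ Ioc (0:ℝ) b = Ioc s b := by
      intro s hs
      rw [Set.inter_comm, Set.Ioc_inter_Ioi, sup_eq_right.2 hs.1.le]
    have hval : ∀ s ∈ Ioc (0:ℝ) b,
        (∫ t in Ioc s b, (t:ℝ) ^ (γ₂ - 2)) = (b ^ (γ₂ - 1) - s ^ (γ₂ - 1)) / (γ₂ - 1) := by
      intro s hs
      rw [← intervalIntegral.integral_of_le hs.2,
        integral_rpow (Or.inl (by linarith : (-1:ℝ) < γ₂ - 2)),
        show γ₂ - 2 + 1 = γ₂ - 1 by ring]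
    have hinner : ∀ s ∈ Ioc (0:ℝ) b,
        (∫ t, g (s, t) ∂μ) = ψ s * ((b ^ (γ₂ - 1) - s ^ (γ₂ - 1)) / (γ₂ - 1)) := by
      intro s hs
      rw [hsec s, integral_indicator measurableSet_Ioi, hμ,
        Measure.restrict_restrict measurableSet_Ioi, hIoc s hs, integral_const_mul,
        hval s hs]
    have hninner : ∀ s ∈ Ioc (0:ℝ) b,
        (∫ t, ‖g (s, t)‖ ∂μ) = ‖ψ s‖ * ((b ^ (γ₂ - 1) - s ^ (γ₂ - 1)) / (γ₂ - 1)) := by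
      intro s hs
      have h1 : (fun t => ‖g (s, t)‖) =
          Set.indicator (Ioi s) (fun t => ‖ψ s‖ * t ^ (γ₂ - 2)) := by
        funext t
        rcases lt_or_ge s t with h | h
        · have ht0 : (0:ℝ) ≤ t := (hs.1.trans h).le
          simp [hgdef, h, Set.indicator_of_mem (mem_Ioi.2 h), norm_mul,
            Real.norm_eq_abs (t ^ (γ₂ - 2)), abs_of_nonneg (Real.rpow_nonneg ht0 _)]
        · simp [hgdef, not_lt.2 h,
            Set.indicator_of_notMem (fun hc => absurd (mem_Ioi.1 hc) (not_lt.2 h))]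
      rw [h1, integral_indicator measurableSet_Ioi, hμ,
        Measure.restrict_restrict measurableSet_Ioi, hIoc s hs, integral_const_mul,
        hval s hs]
    have hgint : Integrable g (μ.prod μ) := by
      refine (integrable_prod_iff hgm).2 ⟨?_, ?_⟩
      · refine (ae_restrict_mem measurableSet_Ioc).mono fun s _ => ?_
        rw [hsec s]
        exact (hrint2.const_mul _).indicator measurableSet_Ioi
      · refine Integrable.congr
          (((((hψint.norm).mul_const (b ^ (γ₂ - 1))).sub (hψ2b.norm)).mul_const
            ((γ₂ - 1)⁻¹))) ?_
        refine (ae_restrict_mem measurableSet_Ioc).mono fun s hs => ?_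
        simp only [Pi.sub_apply]
        rw [hninner s hs, norm_mul, Real.norm_eq_abs (s ^ (γ₂ - 1)),
          abs_of_nonneg (Real.rpow_nonneg hs.1.le _), Real.norm_eq_abs]
        field_simp
    have hswap : (∫ s, (∫ t, g (s, t) ∂μ) ∂μ) = ∫ t, (∫ s, g (s, t) ∂μ) ∂μ :=
      integral_integral_swap hgint
    have hφb : (∫ s in Ioc (0:ℝ) b, ψ s) = φ b := by
      have := hψftc 0 b le_rfl hb.le
      rw [hφ0, sub_zero] at this
      exact this.symm
    have hLHS : (∫ s, (∫ t, g (s, t) ∂μ) ∂μ)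
        = (φ b * b ^ (γ₂ - 1) - (∫ r in Ioc (0:ℝ) b, ψ r * r ^ (γ₂ - 1))) * (γ₂ - 1)⁻¹ := by
      have h1 : (∫ s, (∫ t, g (s, t) ∂μ) ∂μ)
          = ∫ s in Ioc (0:ℝ) b, (ψ s * b ^ (γ₂ - 1) - ψ s * s ^ (γ₂ - 1)) * (γ₂ - 1)⁻¹ := by
        refine integral_congr_ae ?_
        filter_upwards [ae_restrict_mem measurableSet_Ioc] with s hs
        rw [hinner s hs]
        field_simp
      rw [h1, integral_mul_const, integral_sub (hψint.mul_const _) hψ2b,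
        integral_mul_const, hφb]
    have hrinner : ∀ t ∈ Ioc (0:ℝ) b, (∫ s, g (s, t) ∂μ) = t ^ (γ₂ - 2) * φ t := by
      intro t ht
      have h1 : (fun s => g (s, t)) =
          Set.indicator (Iio t) (fun s => ψ s * t ^ (γ₂ - 2)) := by
        funext s
        simp [hgdef, Set.indicator_apply, mem_Iio]
      have h2 : Iio t ∩ Ioc (0:ℝ) b = Ioo 0 t := by
        ext s
        simp only [mem_inter_iff, mem_Iio, mem_Ioc, mem_Ioo]
        constructor
        · rintro ⟨h1', h2', _⟩; exact ⟨h2', h1'⟩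
        · rintro ⟨h1', h2'⟩; exact ⟨h2', h1', (h2'.le).trans ht.2⟩
      rw [h1, integral_indicator measurableSet_Iio, hμ,
        Measure.restrict_restrict measurableSet_Iio, h2, integral_mul_const,
        ← integral_Ioc_eq_integral_Ioo]
      have h3 : (∫ s in Ioc (0:ℝ) t, ψ s) = φ t := by
        have := hψftc 0 t le_rfl ht.1.le
        rw [hφ0, sub_zero] at this
        exact this.symm
      rw [h3]
      ring
    have hRHS : (∫ t, (∫ s, g (s, t) ∂μ) ∂μ) = F₂ b := by
      refine integral_congr_ae ?_
      filter_upwards [ae_restrict_mem measurableSet_Ioc] with t ht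
      rw [hrinner t ht]
    have hfin : (φ b * b ^ (γ₂ - 1) - (∫ r in Ioc (0:ℝ) b, ψ r * r ^ (γ₂ - 1))) * (γ₂ - 1)⁻¹
        = F₂ b := by rw [← hLHS, hswap, hRHS]
    rw [hstep0]
    have h4 : φ b * b ^ (γ₂ - 1) - (∫ r in Ioc (0:ℝ) b, ψ r * r ^ (γ₂ - 1))
        = F₂ b * (γ₂ - 1) := by
      rw [← hfin]
      field_simp
    linarith [h4]
  constructor
  · rw [hJ₁, e4, e8]
    exact (alg_aux γ₁ γ₂ b (b ^ (1 - γ₁)) (b ^ (1 - γ₂)) (F₁ b) (F₂ b) (φ b) d hbne hx0.ne'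
      hy0.ne' hγd hdD hPhi).1
  · rw [hJ₂, e3, e7]
    exact (alg_aux γ₁ γ₂ b (b ^ (1 - γ₁)) (b ^ (1 - γ₂)) (F₁ b) (F₂ b) (φ b) d hbne hx0.ne'
      hy0.ne' hγd hdD hPhi).2
end
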